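/- arXiv:2502.03113 — 5 statements merged into one kernel-verified Lean document; each statement's English description precedes it below -/
import Mathlib

section
/- Consider a scheduling game with rank-based utilities on m identical machines with n unit jobs, where n = ℓ·m + c with 0 ≤ c < m. Let s be a profile that is stable against cost-reducing deviations and balanced, i.e., exactly c machines have load ℓ+1 and the remaining m−c machines have load ℓ. Let P be the set of jobs with completion time ℓ+1, P₁ the set of jobs with completion time ℓ that are processed last on their machine, and P₂ the set of jobs with completion time ℓ that are not processed last on their machine. Then s is a pure Nash equilibrium if and only if: (1) for every j ∈ P assigned to machine M_i and every j' ∈ P with j' ≠ j, π_i(j) < π_i(j'); and (2) for every j ∈ P₁ assigned to machine M_i and every j' ∈ P₁ with j' ≠ j, π_i(j) < π_i(j'), and for every j ∈ P₂ assigned to machine M_i and every j' ∈ P₁, π_i(j) < π_i(j'). -/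
open Finset
open scoped Classical

noncomputable section

variable {J M : Type*} [Fintype J]

/-- Completion time of job `j` in profile `s`: the total processing time of the jobs on
`j`'s machine that do not come after `j` in that machine's priority list, divided by the speed. -/
def Ctime (p : J → ℝ) (r : M → ℝ) (π : M → J → ℕ) (s : J → M) (j : J) : ℝ :=
  (∑ j' ∈ univ.filter (fun j' => s j' = s j ∧ π (s j) j' ≤ π (s j) j), p j') / r (s j)

/-- Rank of job `j` in profile `s`. -/
def rankOf (p : J → ℝ) (r : M → ℝ) (π : M → J → ℕ) (s : J → M) (j : J) : ℝ :=
  ((univ.filter (fun j' => Ctime p r π s j' < Ctime p r π s j)).card : ℝ) +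
    (((univ.filter (fun j' => Ctime p r π s j' = Ctime p r π s j)).card : ℝ) + 1) / 2

/-- The unilateral deviation of job `j` to machine `i` is beneficial. -/
def Beneficial (p : J → ℝ) (r : M → ℝ) (π : M → J → ℕ) (s : J → M) (j : J) (i : M) : Prop :=
  rankOf p r π (Function.update s j i) j < rankOf p r π s j ∨
    (rankOf p r π (Function.update s j i) j = rankOf p r π s j ∧
      Ctime p r π (Function.update s j i) j < Ctime p r π s j)

/-- Pure Nash equilibrium: no job has a beneficial deviation. -/
def IsNE (p : J → ℝ) (r : M → ℝ) (π : M → J → ℕ) (s : J → M) : Prop :=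
  ∀ j i, ¬ Beneficial p r π s j i

/-- `s` is stable against cost-reducing deviations. -/
def StableCost (p : J → ℝ) (r : M → ℝ) (π : M → J → ℕ) (s : J → M) : Prop :=
  ∀ j i, ¬ Ctime p r π (Function.update s j i) j < Ctime p r π s j

/-- Job `j` is assigned to machine `i` and is processed last on it. -/
def IsLastOn (π : M → J → ℕ) (s : J → M) (i : M) (j : J) : Prop :=
  s j = i ∧ ∀ j', j' ≠ j → s j' = i → π i j' < π i j

/-!
For unit jobs on identical machines the completion time of a job is its position on its machine,
and the number of jobs finishing by time `t` is `∑ i, min t (load i)`. Under cost-stability a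
deviating job never finishes earlier, and comparing these counts before and after the move shows
that its rank drops exactly when it keeps its completion time `t`, was last on its machine (which
thus loses its job finishing at `t`), and the target machine's job finishing at `t` comes after it
in that machine's list. So `s` is an equilibrium iff every job that is last on its machine comes,
in each other machine's list, after that machine's job with the same completion time. With loads
`ℓ` and `ℓ + 1` the jobs last on their machine are those of `P` and `P₁`, and this condition
splits into (1) and (2).
-/

theorem beneficial_iff_rankOf_lt {p : J → ℝ} {r : M → ℝ} {π : M → J → ℕ} {s : J → M}
    (hst : StableCost p r π s) (j : J) (i : M) :
    Beneficial p r π s j i ↔ rankOf p r π (Function.update s j i) j < rankOf p r π s j :=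
  or_iff_left fun h => hst j i h.2

theorem sum_update_add {ι α : Type*} [Fintype ι] [DecidableEq ι] [AddCommMonoid α]
    (g : ι → α) (i : ι) (v : α) : ∑ x, Function.update g i v x + g i = ∑ x, g x + v := by
  rw [sum_update_of_mem (mem_univ i), sum_eq_add_sum_sdiff_singleton_of_mem (mem_univ i) g]
  abel

namespace SchedulingGame

section Positions

variable (π : M → J → ℕ) (s : J → M)

def load (i : M) : ℕ := (univ.filter fun j => s j = i).card

def pos (j : J) : ℕ := (univ.filter fun j' => s j' = s j ∧ π (s j) j' ≤ π (s j) j).card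

def numAhead (b : M) (j : J) : ℕ := (univ.filter fun j' => s j' = b ∧ π b j' < π b j).card

theorem Ctime_unit (j : J) :
    Ctime (fun _ => (1 : ℝ)) (fun _ => (1 : ℝ)) π s j = pos π s j := by
  simp [Ctime, pos]

theorem one_le_pos (j : J) : 1 ≤ pos π s j :=
  card_pos.mpr ⟨j, by simp⟩

theorem pos_le_load (j : J) : pos π s j ≤ load s (s j) :=
  card_le_card fun _ hx => by simp_all

variable {π s}

theorem pos_lt_pos_of_lt {j₁ j₂ : J} (h : s j₁ = s j₂) (hlt : π (s j₁) j₁ < π (s j₁) j₂) :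
    pos π s j₁ < pos π s j₂ := by
  unfold pos
  rw [← h]
  refine card_lt_card ((ssubset_iff_of_subset fun x hx => ?_).mpr ⟨j₂, ?_, ?_⟩)
  · simp only [mem_filter, mem_univ, true_and] at hx ⊢
    exact ⟨hx.1, hx.2.trans hlt.le⟩
  · simp [h]
  · simp [hlt]

theorem pos_injOn (hπ : ∀ i, Function.Injective (π i)) (i : M) :
    Set.InjOn (pos π s) {j | s j = i} := by
  intro j₁ h₁ j₂ h₂ hpos
  have h : s j₁ = s j₂ := h₁.trans h₂.symm
  rcases lt_trichotomy (π (s j₁) j₁) (π (s j₁) j₂) with hlt | heq | hgt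
  · exact absurd hpos (pos_lt_pos_of_lt h hlt).ne
  · exact hπ _ heq
  · exact absurd hpos (pos_lt_pos_of_lt h.symm (h ▸ hgt)).ne'

theorem image_pos_eq_Icc (hπ : ∀ i, Function.Injective (π i)) (i : M) :
    (univ.filter fun j => s j = i).image (pos π s) = Icc 1 (load s i) := by
  have hinj : Set.InjOn (pos π s) (univ.filter fun j => s j = i) := by
    simpa using pos_injOn hπ i
  refine eq_of_subset_of_card_le (fun t ht => ?_) ?_
  · obtain ⟨j, hj, rfl⟩ := mem_image.mp ht
    rw [mem_Icc, ← (mem_filter.mp hj).2]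
    exact ⟨one_le_pos π s j, pos_le_load π s j⟩
  · rw [card_image_of_injOn hinj, Nat.card_Icc, Nat.add_sub_cancel]
    rfl

theorem exists_pos_eq (hπ : ∀ i, Function.Injective (π i)) {i : M} {t : ℕ} (h₁ : 1 ≤ t)
    (h₂ : t ≤ load s i) : ∃ q, s q = i ∧ pos π s q = t := by
  have : t ∈ (univ.filter fun j => s j = i).image (pos π s) := by
    rw [image_pos_eq_Icc hπ]
    exact mem_Icc.mpr ⟨h₁, h₂⟩
  simpa using this

theorem isLastOn_iff (hπ : ∀ i, Function.Injective (π i)) (j : J) :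
    IsLastOn π s (s j) j ↔ pos π s j = load s (s j) := by
  have hpos : pos π s j =
      ((univ.filter fun j' => s j' = s j).filter fun j' => π (s j) j' ≤ π (s j) j).card := by
    rw [filter_filter]; rfl
  rw [hpos, load, card_filter_eq_iff]
  simp only [IsLastOn, mem_filter, mem_univ, true_and]
  refine ⟨fun h j' hj' => ?_, fun h j' hne hj' => ?_⟩
  · rcases eq_or_ne j' j with rfl | hne
    · exact le_rfl
    · exact (h j' hne hj').le
  · exact (h j' hj').lt_of_ne fun he => hne (hπ _ he)

theorem pos_le_numAhead_iff {q j : J} {b : M} (hq : s q = b) :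
    pos π s q ≤ numAhead π s b j ↔ π b q < π b j := by
  unfold pos numAhead
  rw [hq]
  constructor
  · intro h
    by_contra! hle
    have hmem : q ∈ univ.filter fun j' => s j' = b ∧ π b j' ≤ π b q := by simp [hq]
    have hsub : (univ.filter fun j' => s j' = b ∧ π b j' < π b j) ⊆
        (univ.filter fun j' => s j' = b ∧ π b j' ≤ π b q).erase q := by
      intro x hx
      simp only [mem_filter, mem_univ, true_and, mem_erase] at hx ⊢
      exact ⟨fun hxq => (hxq ▸ hx.2).not_ge hle, hx.1, (hx.2.trans_le hle).le⟩
    have hcard := card_le_card hsub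
    rw [card_erase_of_mem hmem] at hcard
    have := card_pos.mpr ⟨q, hmem⟩
    omega
  · intro h
    exact card_le_card fun x hx => by
      simp only [mem_filter, mem_univ, true_and] at hx ⊢
      exact ⟨hx.1, hx.2.trans_lt h⟩

theorem pos_le_pos_update (hst : StableCost (fun _ => (1 : ℝ)) (fun _ => (1 : ℝ)) π s)
    (j : J) (b : M) : pos π s j ≤ pos π (Function.update s j b) j := by
  have := hst j b
  rw [Ctime_unit, Ctime_unit] at this
  exact_mod_cast not_lt.mp this

theorem pos_update (hπ : ∀ i, Function.Injective (π i)) {j : J} {b : M} (hb : b ≠ s j) :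
    pos π (Function.update s j b) j = numAhead π s b j + 1 := by
  have h : (univ.filter fun j' => Function.update s j b j' = b ∧ π b j' ≤ π b j) =
      insert j (univ.filter fun j' => s j' = b ∧ π b j' < π b j) := by
    ext x
    rcases eq_or_ne x j with rfl | hx
    · simp
    · simp only [mem_insert, mem_filter, mem_univ, true_and, Function.update_of_ne hx, hx,
        false_or]
      exact and_congr_right fun _ => le_iff_lt_or_eq.trans (or_iff_left fun he => hx (hπ b he))
  rw [pos, Function.update_self, h, card_insert_of_notMem (by simp [hb.symm]), numAhead]

theorem load_update {j : J} {b : M} (hb : b ≠ s j) :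
    load (Function.update s j b) =
      Function.update (Function.update (load s) (s j) (load s (s j) - 1)) b (load s b + 1) := by
  funext i
  rcases eq_or_ne i b with rfl | hib
  · rw [Function.update_self]
    unfold load
    rw [← card_insert_of_notMem (a := j) (by simp [hb.symm])]
    congr 1
    ext x
    rcases eq_or_ne x j with rfl | hx <;> simp [Function.update_of_ne, *]
  · rw [Function.update_of_ne hib]
    rcases eq_or_ne i (s j) with rfl | hij
    · rw [Function.update_self]
      unfold load
      rw [← card_erase_of_mem (s := univ.filter _) (a := j) (by simp)]
      congr 1
      ext x
      rcases eq_or_ne x j with rfl | hx <;> simp [Function.update_of_ne, *]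
    · rw [Function.update_of_ne hij]
      unfold load
      congr 1
      ext x
      rcases eq_or_ne x j with rfl | hx <;> simp [Function.update_of_ne, hib.symm, hij.symm, *]

end Positions

section Ranks

variable [Fintype M] (π : M → J → ℕ) (s : J → M)

def cumLoad (t : ℕ) : ℕ := ∑ i, min t (load s i)

theorem card_filter_pos_le (hπ : ∀ i, Function.Injective (π i)) (t : ℕ) :
    (univ.filter fun j => pos π s j ≤ t).card = cumLoad s t := by
  rw [card_eq_sum_card_fiberwise (f := s) (t := univ) fun _ _ => mem_univ _, cumLoad]
  refine sum_congr rfl fun i _ => ?_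
  have hinj : Set.InjOn (pos π s) ((univ.filter fun j => s j = i).filter fun j => pos π s j ≤ t) :=
    fun j₁ h₁ j₂ h₂ => pos_injOn hπ i (by simp_all) (by simp_all)
  have hIcc : (Icc 1 (load s i)).filter (· ≤ t) = Icc 1 (min t (load s i)) := by
    ext x
    simp only [mem_filter, mem_Icc]
    omega
  rw [filter_comm, ← card_image_of_injOn hinj, ← filter_image (p := (· ≤ t)),
    image_pos_eq_Icc hπ, hIcc, Nat.card_Icc, Nat.add_sub_cancel]

theorem cumLoad_mono : Monotone (cumLoad s) :=
  fun _ _ h => sum_le_sum fun _ _ => min_le_min_right _ h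

theorem cumLoad_pred_pos_lt (j : J) : cumLoad s (pos π s j - 1) < cumLoad s (pos π s j) := by
  have h₁ := one_le_pos π s j
  have h₂ := pos_le_load π s j
  exact sum_lt_sum (fun _ _ => min_le_min_right _ (Nat.sub_le _ 1))
    ⟨s j, mem_univ _, by omega⟩

theorem rankOf_unit (hπ : ∀ i, Function.Injective (π i)) (j : J) :
    rankOf (fun _ => (1 : ℝ)) (fun _ => (1 : ℝ)) π s j =
      ((cumLoad s (pos π s j - 1) : ℝ) + cumLoad s (pos π s j) + 1) / 2 := by
  have h₁ := one_le_pos π s j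
  have hlt : (univ.filter fun j' => pos π s j' < pos π s j) =
      univ.filter fun j' => pos π s j' ≤ pos π s j - 1 :=
    filter_congr fun x _ => by omega
  have hsplit := card_filter_add_card_filter_not (s := univ.filter fun j' =>
    pos π s j' ≤ pos π s j) (fun j' => pos π s j' ≤ pos π s j - 1)
  rw [filter_filter, filter_filter] at hsplit
  have heq : (univ.filter fun j' => pos π s j' ≤ pos π s j ∧ ¬pos π s j' ≤ pos π s j - 1) =
      univ.filter fun j' => pos π s j' = pos π s j :=
    filter_congr fun x _ => by omega
  have hle : (univ.filter fun j' => pos π s j' ≤ pos π s j ∧ pos π s j' ≤ pos π s j - 1) =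
      univ.filter fun j' => pos π s j' ≤ pos π s j - 1 :=
    filter_congr fun x _ => by omega
  rw [heq, hle, card_filter_pos_le π s hπ, card_filter_pos_le π s hπ] at hsplit
  simp only [rankOf, Ctime_unit, Nat.cast_lt, Nat.cast_inj, hlt, card_filter_pos_le π s hπ]
  rw [← hsplit]
  push_cast
  ring

theorem cumLoad_update {j : J} {b : M} (hb : b ≠ s j) (x : ℕ) :
    cumLoad (Function.update s j b) x + min x (load s (s j)) + min x (load s b) =
      cumLoad s x + min x (load s (s j) - 1) + min x (load s b + 1) := by
  have hmin : (fun i => min x (load (Function.update s j b) i)) =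
      Function.update (Function.update (fun i => min x (load s i)) (s j)
        (min x (load s (s j) - 1))) b (min x (load s b + 1)) := by
    rw [load_update hb]
    funext i
    simp only [Function.update_apply]
    split_ifs <;> rfl
  have h₁ := sum_update_add (fun i => min x (load s i)) (s j) (min x (load s (s j) - 1))
  have h₂ := sum_update_add (Function.update (fun i => min x (load s i)) (s j)
    (min x (load s (s j) - 1))) b (min x (load s b + 1))
  rw [Function.update_of_ne hb] at h₂
  rw [cumLoad, cumLoad, show ∑ i, min x (load (Function.update s j b) i) = _ from
    congrArg (fun f => ∑ i, f i) hmin]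
  omega

theorem rankOf_update_lt_iff (hπ : ∀ i, Function.Injective (π i)) {j : J} {b : M}
    (hb : b ≠ s j) (hle : pos π s j ≤ pos π (Function.update s j b) j) :
    rankOf (fun _ => (1 : ℝ)) (fun _ => (1 : ℝ)) π (Function.update s j b) j <
        rankOf (fun _ => (1 : ℝ)) (fun _ => (1 : ℝ)) π s j ↔
      pos π (Function.update s j b) j = pos π s j ∧ pos π s j = load s (s j) ∧
        pos π s j ≤ load s b := by
  have hupd := cumLoad_update s hb
  have h₁ := one_le_pos π s j
  have h₂ := pos_le_load π s j
  have h₃ : pos π (Function.update s j b) j ≤ load s b + 1 := by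
    have := pos_le_load π (Function.update s j b) j
    rwa [Function.update_self, load_update hb, Function.update_self] at this
  set s' := Function.update s j b
  rw [rankOf_unit π s' hπ, rankOf_unit π s hπ, div_lt_div_iff_of_pos_right two_pos,
    add_lt_add_iff_right]
  norm_cast
  rcases hle.eq_or_lt with heq | hlt
  · rw [← heq]
    have := hupd (pos π s j - 1)
    have := hupd (pos π s j)
    omega
  · have := hupd (pos π s j)
    have := cumLoad_mono s' (show pos π s j ≤ pos π s' j - 1 by omega)
    have := cumLoad_pred_pos_lt π s' j
    have := cumLoad_pred_pos_lt π s j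
    omega

theorem not_beneficial_iff (hπ : ∀ i, Function.Injective (π i))
    (hst : StableCost (fun _ => (1 : ℝ)) (fun _ => (1 : ℝ)) π s) {j : J} {b : M}
    (hb : b ≠ s j) :
    ¬Beneficial (fun _ => (1 : ℝ)) (fun _ => (1 : ℝ)) π s j b ↔
      (IsLastOn π s (s j) j → ∀ q, s q = b → pos π s q = pos π s j → π b q < π b j) := by
  have hle := pos_le_pos_update hst j b
  rw [beneficial_iff_rankOf_lt hst, rankOf_update_lt_iff π s hπ hb hle, pos_update hπ hb,
    isLastOn_iff hπ]
  rw [pos_update hπ hb] at hle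
  constructor
  · intro h hlast q hq hpos
    by_contra hqj
    rw [← pos_le_numAhead_iff hq, hpos] at hqj
    exact h ⟨by omega, hlast, hpos ▸ hq ▸ pos_le_load π s q⟩
  · rintro h ⟨hahead, hlast, hload⟩
    obtain ⟨q, hq, hpos⟩ := exists_pos_eq hπ (one_le_pos π s j) hload
    have := (pos_le_numAhead_iff hq).2 (h hlast q hq hpos)
    omega

theorem isNE_iff_forall_precedes (hπ : ∀ i, Function.Injective (π i))
    (hst : StableCost (fun _ => (1 : ℝ)) (fun _ => (1 : ℝ)) π s) :
    IsNE (fun _ => (1 : ℝ)) (fun _ => (1 : ℝ)) π s ↔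
      ∀ j q, q ≠ j → IsLastOn π s (s j) j →
        Ctime (fun _ => (1 : ℝ)) (fun _ => (1 : ℝ)) π s q =
          Ctime (fun _ => (1 : ℝ)) (fun _ => (1 : ℝ)) π s j → π (s q) q < π (s q) j := by
  simp only [Ctime_unit, Nat.cast_inj]
  constructor
  · intro h j q hqj hlast hpos
    have hsq : s q ≠ s j := fun he => hqj (pos_injOn hπ (s j) he rfl hpos)
    exact (not_beneficial_iff π s hπ hst hsq).1 (h j (s q)) hlast q rfl hpos
  · intro h j b
    rcases eq_or_ne b (s j) with rfl | hb
    · simp [Beneficial]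
    · refine (not_beneficial_iff π s hπ hst hb).2 fun hlast q hq hpos => hq ▸ h j q ?_ hlast hpos
      rintro rfl
      exact hb hq.symm

end Ranks

end SchedulingGame

open SchedulingGame in
theorem NE_iff_balanced_general (n m ℓ : ℕ)
    (π : Fin m → Fin n → ℕ) (hπ : ∀ i, Function.Injective (π i))
    (s : Fin n → Fin m)
    (hstable : StableCost (fun _ => (1:ℝ)) (fun _ => (1:ℝ)) π s)
    (hload : ∀ i, (univ.filter (fun j => s j = i)).card = ℓ ∨
      (univ.filter (fun j => s j = i)).card = ℓ + 1) :
    IsNE (fun _ => (1:ℝ)) (fun _ => (1:ℝ)) π s ↔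
      ((∀ j, Ctime (fun _ => (1:ℝ)) (fun _ => (1:ℝ)) π s j = (ℓ : ℝ) + 1 →
          ∀ j', Ctime (fun _ => (1:ℝ)) (fun _ => (1:ℝ)) π s j' = (ℓ : ℝ) + 1 → j' ≠ j → π (s j) j < π (s j) j') ∧
        (∀ j, Ctime (fun _ => (1:ℝ)) (fun _ => (1:ℝ)) π s j = (ℓ : ℝ) → IsLastOn π s (s j) j →
          ∀ j', Ctime (fun _ => (1:ℝ)) (fun _ => (1:ℝ)) π s j' = (ℓ : ℝ) → IsLastOn π s (s j') j' → j' ≠ j →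
            π (s j) j < π (s j) j') ∧
        (∀ j, Ctime (fun _ => (1:ℝ)) (fun _ => (1:ℝ)) π s j = (ℓ : ℝ) → ¬ IsLastOn π s (s j) j →
          ∀ j', Ctime (fun _ => (1:ℝ)) (fun _ => (1:ℝ)) π s j' = (ℓ : ℝ) → IsLastOn π s (s j') j' →
            π (s j) j < π (s j) j')) := by
  -- `load` decides `s j = i` classically, `hload` with the instance of `Fin m`
  have hload : ∀ i, load s i = ℓ ∨ load s i = ℓ + 1 := fun i => by
    unfold load; convert hload i
  rw [isNE_iff_forall_precedes π s hπ hstable]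
  constructor
  · intro h
    refine ⟨fun j hj j' hj' hne => h j' j hne.symm ?_ (hj.trans hj'.symm),
      fun j hj _ j' hj' hlast' hne => h j' j hne.symm hlast' (hj.trans hj'.symm),
      fun j hj hlast j' hj' hlast' =>
        h j' j (fun he => hlast (he ▸ hlast')) hlast' (hj.trans hj'.symm)⟩
    have hpos : pos π s j' = ℓ + 1 := by exact_mod_cast (Ctime_unit π s j').symm.trans hj'
    have := pos_le_load π s j'
    rw [isLastOn_iff hπ]
    rcases hload (s j') with h' | h' <;> omega
  · rintro ⟨h₁, h₂, h₃⟩ j q hqj hlast hC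
    have hCj := Ctime_unit π s j
    rw [(isLastOn_iff hπ j).1 hlast] at hCj
    rcases hload (s j) with hL | hL <;> rw [hL] at hCj
    · by_cases hq : IsLastOn π s (s q) q
      · exact h₂ q (hC.trans hCj) hq j hCj hlast hqj.symm
      · exact h₃ q (hC.trans hCj) hq j hCj hlast
    · push_cast at hCj
      exact h₁ q (hC.trans hCj) j hCj hqj.symm

/-- Characterization of NE among balanced cost-stable profiles of unit jobs on
identical machines. -/
theorem NE_iff_balanced (n m ℓ c : ℕ) (hm : 0 < m) (hc : c < m) (hn : n = ℓ * m + c)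
    (π : Fin m → Fin n → ℕ) (hπ : ∀ i, Function.Injective (π i))
    (s : Fin n → Fin m)
    (hstable : StableCost (fun _ => (1:ℝ)) (fun _ => (1:ℝ)) π s)
    (hload : ∀ i, (univ.filter (fun j => s j = i)).card = ℓ ∨
      (univ.filter (fun j => s j = i)).card = ℓ + 1)
    (hbal : (univ.filter (fun i : Fin m =>
      (univ.filter (fun j => s j = i)).card = ℓ + 1)).card = c) :
    IsNE (fun _ => (1:ℝ)) (fun _ => (1:ℝ)) π s ↔
      ((∀ j, Ctime (fun _ => (1:ℝ)) (fun _ => (1:ℝ)) π s j = (ℓ : ℝ) + 1 →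
          ∀ j', Ctime (fun _ => (1:ℝ)) (fun _ => (1:ℝ)) π s j' = (ℓ : ℝ) + 1 → j' ≠ j → π (s j) j < π (s j) j') ∧
        (∀ j, Ctime (fun _ => (1:ℝ)) (fun _ => (1:ℝ)) π s j = (ℓ : ℝ) → IsLastOn π s (s j) j →
          ∀ j', Ctime (fun _ => (1:ℝ)) (fun _ => (1:ℝ)) π s j' = (ℓ : ℝ) → IsLastOn π s (s j') j' → j' ≠ j →
            π (s j) j < π (s j) j') ∧
        (∀ j, Ctime (fun _ => (1:ℝ)) (fun _ => (1:ℝ)) π s j = (ℓ : ℝ) → ¬ IsLastOn π s (s j) j →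
          ∀ j', Ctime (fun _ => (1:ℝ)) (fun _ => (1:ℝ)) π s j' = (ℓ : ℝ) → IsLastOn π s (s j') j' →
            π (s j) j < π (s j) j')) :=
  NE_iff_balanced_general n m ℓ π hπ s hstable hload
end
end

section
/- Consider a scheduling game with rank-based utilities on two identical machines with arbitrary positive processing times, where the priority lists are inversed (Inversed-Policies): π₂ is the reverse linear order of π₁, i.e., π₁(j) = n − π₂(j) + 1 for every job j. Then every greedy profile is a pure Nash equilibrium; in particular, a pure Nash equilibrium exists. -/
open Finset
open scoped Classical

noncomputable section

variable {J M : Type*} [Fintype J]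

/-- Partial assignments reachable by the greedy algorithm on identical machines:
repeatedly pick a machine of minimal current load and assign to it the first
not-yet-assigned job in its priority list. -/
inductive GreedyIdentical (p : J → ℝ) (π : M → J → ℕ) : (J → Option M) → Prop
  | empty : GreedyIdentical p π (fun _ => none)
  | step (f : J → Option M) (i : M) (j : J)
      (hf : GreedyIdentical p π f) (hj : f j = none)
      (hmin : ∀ i', (∑ j' ∈ univ.filter (fun j' => f j' = some i), p j') ≤
          ∑ j' ∈ univ.filter (fun j' => f j' = some i'), p j')
      (hfirst : ∀ j', f j' = none → j' ≠ j → π i j < π i j') :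
      GreedyIdentical p π (Function.update f j (some i))

/-- Sums over filters agree regardless of the `Decidable` instances used. -/
lemma sum_filter_ext {α : Type*} (s : Finset α) (q q' : α → Prop) (h : DecidablePred q)
    (h' : DecidablePred q') (w : ∀ x, q x ↔ q' x) (g : α → ℝ) :
    (∑ x ∈ @Finset.filter α q h s, g x) = ∑ x ∈ @Finset.filter α q' h' s, g x := by
  have e : @Finset.filter α q h s = @Finset.filter α q' h' s := by
    ext x
    rw [Finset.mem_filter, Finset.mem_filter]
    exact and_congr_right fun _ => w x
  rw [e]

/-- Generic rank monotonicity: if `j`'s completion time does not decrease while every other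
job's completion time does not increase, then `j`'s rank does not decrease. -/
lemma rank_mono {J : Type*} [Fintype J] (C C' : J → ℝ) (j : J)
    (hj : C j ≤ C' j) (hle : ∀ x, x ≠ j → C' x ≤ C x) :
    ((univ.filter (fun x => C x < C j)).card : ℝ) +
      (((univ.filter (fun x => C x = C j)).card : ℝ) + 1) / 2 ≤
    ((univ.filter (fun x => C' x < C' j)).card : ℝ) +
      (((univ.filter (fun x => C' x = C' j)).card : ℝ) + 1) / 2 := by
  classical
  set A := univ.filter (fun x => C x < C j) with hAdef
  set T := univ.filter (fun x => C x = C j) with hTdef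
  set A' := univ.filter (fun x => C' x < C' j) with hA'def
  set T' := univ.filter (fun x => C' x = C' j) with hT'def
  set K := (T.erase j) ∩ A' with hKdef
  have hjT : j ∈ T := by simp [hTdef]
  have hdisj : Disjoint A K := by
    rw [Finset.disjoint_left]
    intro x hxA hxK
    have h1 : C x < C j := (mem_filter.1 hxA).2
    have h2 : x ∈ T := mem_of_mem_erase (mem_of_mem_inter_left hxK)
    have h3 : C x = C j := (mem_filter.1 h2).2
    linarith
  have hsub1 : A ∪ K ⊆ A' := by
    intro x hx
    rcases mem_union.1 hx with hx | hx
    · have h1 : C x < C j := (mem_filter.1 hx).2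
      have hxj : x ≠ j := fun h => by rw [h] at h1; exact lt_irrefl _ h1
      exact mem_filter.2 ⟨mem_univ _, lt_of_le_of_lt (hle x hxj) (lt_of_lt_of_le h1 hj)⟩
    · exact mem_of_mem_inter_right hx
  have h1 : A.card + K.card ≤ A'.card := by
    rw [← card_union_of_disjoint hdisj]; exact card_le_card hsub1
  have hKsub : K ⊆ T.erase j := inter_subset_left
  have hsub2 : insert j ((T.erase j) \ K) ⊆ T' := by
    intro x hx
    rcases mem_insert.1 hx with rfl | hx
    · exact mem_filter.2 ⟨mem_univ _, rfl⟩
    · obtain ⟨hx1, hx2⟩ := mem_sdiff.1 hx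
      have hxj : x ≠ j := ne_of_mem_erase hx1
      have hxT : C x = C j := (mem_filter.1 (mem_of_mem_erase hx1)).2
      have hnA' : x ∉ A' := fun h => hx2 (mem_inter.2 ⟨hx1, h⟩)
      have hle1 : C' x ≤ C' j := by
        have := hle x hxj
        rw [hxT] at this
        exact this.trans hj
      have hnlt : ¬ C' x < C' j := fun h => hnA' (mem_filter.2 ⟨mem_univ _, h⟩)
      exact mem_filter.2 ⟨mem_univ _, le_antisymm hle1 (not_lt.1 hnlt)⟩
  have h2 : 1 + ((T.erase j) \ K).card ≤ T'.card := by
    rw [add_comm, ← card_insert_of_notMem (fun h => (notMem_erase j T) (mem_sdiff.1 h).1)]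
    exact card_le_card hsub2
  have h3 : ((T.erase j) \ K).card + K.card = (T.erase j).card :=
    card_sdiff_add_card_eq_card hKsub
  have h4 : (T.erase j).card + 1 = T.card := card_erase_add_one hjT
  have r1 : (A.card : ℝ) + K.card ≤ A'.card := by exact_mod_cast h1
  have r2 : (1 : ℝ) + ((T.erase j) \ K).card ≤ T'.card := by exact_mod_cast h2
  have r3 : (((T.erase j) \ K).card : ℝ) + K.card = (T.erase j).card := by exact_mod_cast h3
  have r4 : ((T.erase j).card : ℝ) + 1 = T.card := by exact_mod_cast h4
  linarith

/-- Structural invariants of greedy partial assignments with inversed policies: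
(B) any assigned job precedes any unassigned job in its machine's priority list;
(A) jobs on different machines are ordered by the first machine's list;
(C) the (partial) completion time of any assigned job is at most any machine's load plus
its own processing time. -/
lemma greedy_inv {J : Type*} [Fintype J] (p : J → ℝ) (hp : ∀ j, 0 < p j)
    (π : Fin 2 → J → ℕ)
    (hrev : ∀ a b, π 0 a < π 0 b ↔ π 1 b < π 1 a)
    (f : J → Option (Fin 2)) (hf : GreedyIdentical p π f) :
    (∀ j j' (i : Fin 2), f j = some i → f j' = none → π i j < π i j') ∧
    (∀ j j' (i i' : Fin 2), f j = some i → f j' = some i' → i ≠ i' → π i j < π i j') ∧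
    (∀ j (i i' : Fin 2), f j = some i →
      (∑ x ∈ univ.filter (fun x => f x = some i ∧ π i x ≤ π i j), p x) ≤
        (∑ x ∈ univ.filter (fun x => f x = some i'), p x) + p j) := by
  have hrev' : ∀ (i i' : Fin 2), i ≠ i' → ∀ a b, π i' b < π i' a → π i a < π i b := by
    intro i i' hne a b h
    fin_cases i <;> fin_cases i' <;>
      first
        | exact absurd rfl hne
        | exact (hrev a b).mpr h
        | exact (hrev b a).mp h
  induction hf with
  | empty => refine ⟨?_, ?_, ?_⟩ <;> intros <;> simp_all
  | step f i j hf hj hmin hfirst IH =>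
    obtain ⟨B, A, C⟩ := IH
    have hmin' : ∀ i' : Fin 2,
        (∑ x ∈ univ.filter (fun x => f x = some i), p x) ≤
          ∑ x ∈ univ.filter (fun x => f x = some i'), p x := fun i' =>
      (sum_filter_ext _ _ _ _ _ (fun _ => Iff.rfl) p).trans_le
        ((hmin i').trans_eq (sum_filter_ext _ _ _ _ _ (fun _ => Iff.rfl) p))
    have hload : ∀ i' : Fin 2,
        (∑ x ∈ univ.filter (fun x => f x = some i'), p x) ≤
        (∑ x ∈ univ.filter (fun x => Function.update f j (some i) x = some i'), p x) := by
      intro i'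
      apply sum_le_sum_of_subset_of_nonneg
      · intro x hx
        have hx' : f x = some i' := (mem_filter.1 hx).2
        have hxj : x ≠ j := fun h => by rw [h, hj] at hx'; exact nomatch hx'
        exact mem_filter.2 ⟨mem_univ _, by rw [Function.update_of_ne hxj]; exact hx'⟩
      · intro x _ _; exact (hp x).le
    refine ⟨?_, ?_, ?_⟩
    · -- B
      intro a b i₀ ha hb
      have hbj : b ≠ j := by
        intro h; rw [h, Function.update_self] at hb; exact nomatch hb
      rw [Function.update_of_ne hbj] at hb
      by_cases haj : a = j
      · subst haj
        rw [Function.update_self] at ha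
        obtain rfl : i = i₀ := Option.some.inj ha
        exact hfirst b hb hbj
      · rw [Function.update_of_ne haj] at ha
        exact B a b i₀ ha hb
    · -- A
      intro a b i₀ i₁ ha hb hne
      by_cases haj : a = j <;> by_cases hbj : b = j
      · subst haj; subst hbj
        rw [Function.update_self] at ha hb
        exact absurd ((Option.some.inj ha).symm.trans (Option.some.inj hb)) hne
      · subst haj
        rw [Function.update_self] at ha
        obtain rfl : i = i₀ := Option.some.inj ha
        rw [Function.update_of_ne hbj] at hb
        exact hrev' i i₁ hne a b (B b a i₁ hb hj)
      · subst hbj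
        rw [Function.update_self] at hb
        rw [Function.update_of_ne haj] at ha
        exact B a b i₀ ha hj
      · rw [Function.update_of_ne haj] at ha
        rw [Function.update_of_ne hbj] at hb
        exact A a b i₀ i₁ ha hb hne
    · -- C
      intro a i₀ i' ha
      by_cases haj : a = j
      · subst haj
        rw [Function.update_self] at ha
        obtain rfl : i = i₀ := Option.some.inj ha
        have hset : univ.filter (fun x => Function.update f a (some i) x = some i ∧ π i x ≤ π i a)
            = insert a (univ.filter (fun x => f x = some i)) := by
          ext x
          simp only [mem_filter, mem_univ, true_and, mem_insert]
          constructor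
          · rintro ⟨h1, h2⟩
            by_cases hxa : x = a
            · exact Or.inl hxa
            · rw [Function.update_of_ne hxa] at h1; exact Or.inr h1
          · rintro (rfl | h)
            · exact ⟨Function.update_self _ _ _, le_refl _⟩
            · have hxa : x ≠ a := fun h' => by rw [h', hj] at h; exact nomatch h
              exact ⟨by rw [Function.update_of_ne hxa]; exact h, (B x a i h hj).le⟩
        rw [hset, sum_insert (by simp [hj])]
        have h1 := hmin' i'
        have h2 := hload i'
        linarith
      · rw [Function.update_of_ne haj] at ha
        have hset : univ.filter
              (fun x => Function.update f j (some i) x = some i₀ ∧ π i₀ x ≤ π i₀ a)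
            = univ.filter (fun x => f x = some i₀ ∧ π i₀ x ≤ π i₀ a) := by
          apply filter_congr
          intro x _
          by_cases hxj : x = j
          · rw [hxj, Function.update_self, hj]
            constructor
            · rintro ⟨h1, h2⟩
              obtain rfl : i = i₀ := Option.some.inj h1
              exact absurd (B a j i ha hj) (not_lt.2 h2)
            · rintro ⟨h1, -⟩; exact nomatch h1
          · rw [Function.update_of_ne hxj]
        rw [hset]
        exact (C a i₀ i' ha).trans (by linarith [hload i'])

/-- The greedy process can always be run to completion. -/
lemma greedy_total {J : Type*} [Fintype J] (p : J → ℝ) (π : Fin 2 → J → ℕ)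
    (hπ : ∀ i, Function.Injective (π i)) :
    ∃ s : J → Fin 2, GreedyIdentical p π (fun j => some (s j)) := by
  have key : ∀ n (f : J → Option (Fin 2)), GreedyIdentical p π f →
      (univ.filter (fun j => f j = none)).card ≤ n →
      ∃ g, GreedyIdentical p π g ∧ ∀ j, g j ≠ none := by
    intro n
    induction n with
    | zero =>
      intro f hf hcard
      refine ⟨f, hf, fun j hj => ?_⟩
      have hmem : j ∈ univ.filter (fun j => f j = none) := by simp [hj]
      rw [Nat.le_zero, card_eq_zero] at hcard
      rw [hcard] at hmem
      exact absurd hmem (notMem_empty j)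
    | succ n IH =>
      intro f hf hcard
      by_cases hall : ∀ j, f j ≠ none
      · exact ⟨f, hf, hall⟩
      · push_neg at hall
        obtain ⟨j₀, hj₀⟩ := hall
        obtain ⟨i, -, hi⟩ := Finset.exists_min_image (univ : Finset (Fin 2))
          (fun i => ∑ x ∈ univ.filter (fun x => f x = some i), p x) ⟨0, mem_univ 0⟩
        obtain ⟨j, hjU, hjmin⟩ := Finset.exists_min_image
          (univ.filter (fun x => f x = none)) (π i) ⟨j₀, by simp [hj₀]⟩
        have hjnone : f j = none := (mem_filter.1 hjU).2
        have hfirst : ∀ j', f j' = none → j' ≠ j → π i j < π i j' := by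
          intro j' h hne
          refine lt_of_le_of_ne (hjmin j' (by simp [h])) fun he => hne ?_
          exact (hπ i he.symm)
        have hstep : GreedyIdentical p π (Function.update f j (some i)) := by
          refine GreedyIdentical.step f i j hf hjnone (fun i' => ?_) hfirst
          exact (sum_filter_ext _ _ _ _ _ (fun _ => Iff.rfl) p).trans_le
            ((hi i' (mem_univ i')).trans_eq (sum_filter_ext _ _ _ _ _ (fun _ => Iff.rfl) p))
        apply IH _ hstep
        have hset : univ.filter (fun x => Function.update f j (some i) x = none)
            = (univ.filter (fun x => f x = none)).erase j := by
          ext x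
          simp only [mem_filter, mem_univ, true_and, mem_erase]
          constructor
          · intro hx
            have hxj : x ≠ j := fun h => by
              rw [h, Function.update_self] at hx; exact nomatch hx
            rw [Function.update_of_ne hxj] at hx
            exact ⟨hxj, hx⟩
          · rintro ⟨hxj, hx⟩
            rw [Function.update_of_ne hxj]; exact hx
        rw [hset, card_erase_of_mem hjU]
        omega
  obtain ⟨g, hg, hgsome⟩ := key _ (fun _ => none) GreedyIdentical.empty le_rfl
  have hsome : ∀ j, (g j).isSome := fun j => Option.ne_none_iff_isSome.mp (hgsome j)
  refine ⟨fun j => (g j).get (hsome j), ?_⟩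
  have hgg : (fun j => some ((g j).get (hsome j))) = g := funext fun j => Option.some_get (hsome j)
  rw [hgg]
  exact hg

/-- With Inversed-Policies on two identical machines, every greedy profile is a NE;
in particular a NE exists. -/
theorem inversed_policies_greedy_NE {J : Type*} [Fintype J]
    (p : J → ℝ) (hp : ∀ j, 0 < p j)
    (π : Fin 2 → J → ℕ) (hπ : ∀ i, Function.Injective (π i))
    (hrev : ∀ a b, π 0 a < π 0 b ↔ π 1 b < π 1 a) :
    (∀ s : J → Fin 2, GreedyIdentical p π (fun j => some (s j)) →
      IsNE p (fun _ => (1:ℝ)) π s) ∧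
    (∃ s : J → Fin 2, IsNE p (fun _ => (1:ℝ)) π s) := by
  have main : ∀ s : J → Fin 2, GreedyIdentical p π (fun j => some (s j)) →
      IsNE p (fun _ => (1:ℝ)) π s := by
    intro s hs
    obtain ⟨B, A, C⟩ := greedy_inv p hp π hrev _ hs
    have hA : ∀ a b : J, s a ≠ s b → π (s a) a < π (s a) b := by
      intro a b h
      exact A a b (s a) (s b) rfl rfl h
    have hC : ∀ (a : J) (i' : Fin 2),
        (∑ x ∈ univ.filter (fun x => s x = s a ∧ π (s a) x ≤ π (s a) a), p x) ≤
          (∑ x ∈ univ.filter (fun x => s x = i'), p x) + p a := by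
      intro a i'
      have h := C a (s a) i' rfl
      simpa using h
    intro j i
    by_cases hij : i = s j
    · subst hij
      intro hb
      unfold Beneficial at hb
      rw [Function.update_eq_self] at hb
      rcases hb with h | ⟨-, h⟩ <;> exact lt_irrefl _ h
    · have hCt : ∀ (t : J → Fin 2) (x : J), Ctime p (fun _ => (1:ℝ)) π t x
          = ∑ y ∈ univ.filter (fun y => t y = t x ∧ π (t x) y ≤ π (t x) x), p y := by
        intro t x
        simp only [Ctime, div_one]
        exact sum_filter_ext _ _ _ _ _ (fun _ => Iff.rfl) p
      have f1 : ∀ x, x ≠ j → Ctime p (fun _ => (1:ℝ)) π (Function.update s j i) x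
          ≤ Ctime p (fun _ => (1:ℝ)) π s x := by
        intro x hxj
        have hsx : Function.update s j i x = s x := Function.update_of_ne hxj _ _
        rw [hCt, hCt, hsx]
        apply sum_le_sum_of_subset_of_nonneg
        · intro y hy
          obtain ⟨-, h1, h2⟩ := mem_filter.1 hy
          by_cases hyj : y = j
          · rw [hyj, Function.update_self] at h1
            rw [hyj] at h2
            have hxsj : s x ≠ s j := by rw [← h1]; exact hij
            exact absurd h2 (not_le.2 (hA x j hxsj))
          · rw [Function.update_of_ne hyj] at h1
            exact mem_filter.2 ⟨mem_univ _, h1, h2⟩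
        · intro y _ _; exact (hp y).le
      have f2 : Ctime p (fun _ => (1:ℝ)) π (Function.update s j i) j
          = (∑ y ∈ univ.filter (fun y => s y = i), p y) + p j := by
        rw [hCt]
        rw [Function.update_self]
        have hset : univ.filter (fun y => Function.update s j i y = i ∧ π i y ≤ π i j)
            = insert j (univ.filter (fun y => s y = i)) := by
          ext y
          simp only [mem_filter, mem_univ, true_and, mem_insert]
          constructor
          · rintro ⟨h1, h2⟩
            by_cases hyj : y = j
            · exact Or.inl hyj
            · rw [Function.update_of_ne hyj] at h1; exact Or.inr h1
          · rintro (rfl | h)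
            · exact ⟨Function.update_self _ _ _, le_refl _⟩
            · have hyj : y ≠ j := fun hc => hij (by rw [hc] at h; exact h.symm)
              have hsy : s y ≠ s j := by rw [h]; exact hij
              have hlt := hA y j hsy
              rw [h] at hlt
              exact ⟨by rw [Function.update_of_ne hyj]; exact h, hlt.le⟩
        rw [hset, sum_insert (by
          simp only [mem_filter, mem_univ, true_and]
          exact fun hc => hij hc.symm)]
        ring
      have f3 : Ctime p (fun _ => (1:ℝ)) π s j
          ≤ (∑ y ∈ univ.filter (fun y => s y = i), p y) + p j := by
        rw [hCt]
        exact hC j i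
      have hcc : Ctime p (fun _ => (1:ℝ)) π s j
          ≤ Ctime p (fun _ => (1:ℝ)) π (Function.update s j i) j := by
        rw [f2]; exact f3
      have hrank : rankOf p (fun _ => (1:ℝ)) π s j
          ≤ rankOf p (fun _ => (1:ℝ)) π (Function.update s j i) j := by
        unfold rankOf
        exact rank_mono _ _ j hcc f1
      intro hb
      unfold Beneficial at hb
      rcases hb with h | ⟨-, h⟩
      · exact absurd hrank (not_le.2 h)
      · exact absurd h (not_lt.2 hcc)
  refine ⟨main, ?_⟩
  obtain ⟨s, hs⟩ := greedy_total p π hπ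
  exact ⟨s, main s hs⟩
end
end

section
/- Consider a scheduling game with rank-based utilities on m ≥ 2 identical machines with n ≥ 2 unit jobs, where all machines share the same priority list π (a global priority list). Then the game admits a pure Nash equilibrium if and only if m = 2 and n is odd. -/
open Finset
open scoped Classical

noncomputable section

variable {J M : Type*} [Fintype J]

/-!
Only the order of the priority list matters, so after relabelling the jobs `π` is the identity
on `Fin n` and the completion time of a job is its position on its machine. If another machine
has fewer jobs ahead of `j` than `j`'s own machine, `j` gains by moving there; hence in an
equilibrium every job picks a least loaded machine, which forces job `x` to finish at time
`x / m + 1`: the jobs come in blocks of `m` consecutive jobs on distinct machines. If the last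
block has two jobs, the first one moves to the second one's machine just ahead of it, keeping
its completion time while breaking their tie. If the last block is a single job and `m ≥ 3`,
the same move works for two jobs of the previous block that avoid the last job's machine. What
remains is `m = 2` with `n` odd, where the alternating assignment is an equilibrium.
-/
open Function

section Relabel

variable {J' : Type*} [Fintype J'] (e : J' ≃ J) {π : M → J → ℕ} {π' : M → J' → ℕ}

theorem card_filter_comp_equiv (P : J → Prop) [DecidablePred P] :
    #{x | P (e x)} = #{y | P y} :=
  card_equiv e (by simp)

variable (hπ : ∀ i a b, π i (e a) ≤ π i (e b) ↔ π' i a ≤ π' i b)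
include hπ

theorem Ctime_comp_equiv (p : J → ℝ) (r : M → ℝ) (s : J → M) (x : J') :
    Ctime p r π s (e x) = Ctime (p ∘ e) r π' (s ∘ e) x := by
  unfold Ctime
  congr 1
  exact (sum_equiv e (by simp [hπ]) (by simp)).symm

theorem rankOf_comp_equiv (p : J → ℝ) (r : M → ℝ) (s : J → M) (x : J') :
    rankOf p r π s (e x) = rankOf (p ∘ e) r π' (s ∘ e) x := by
  unfold rankOf
  rw [← card_filter_comp_equiv e, ← card_filter_comp_equiv e]
  simp only [Ctime_comp_equiv e hπ]

theorem beneficial_comp_equiv (p : J → ℝ) (r : M → ℝ) (s : J → M) (x : J') (i : M) :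
    Beneficial p r π s (e x) i ↔ Beneficial (p ∘ e) r π' (s ∘ e) x i := by
  unfold Beneficial
  rw [rankOf_comp_equiv e hπ, rankOf_comp_equiv e hπ, Ctime_comp_equiv e hπ,
    Ctime_comp_equiv e hπ, update_comp_eq_of_injective s e.injective]

theorem isNE_comp_equiv (p : J → ℝ) (r : M → ℝ) (s : J → M) :
    IsNE p r π s ↔ IsNE (p ∘ e) r π' (s ∘ e) := by
  refine ⟨fun h x i => (beneficial_comp_equiv e hπ p r s x i).not.1 (h (e x) i), fun h j i => ?_⟩
  simpa using (beneficial_comp_equiv e hπ p r s (e.symm j) i).not.2 (h _ i)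

end Relabel

theorem not_beneficial_self (p : J → ℝ) (r : M → ℝ) (π : M → J → ℕ) (s : J → M) (j : J) :
    ¬ Beneficial p r π s j (s j) := by
  simp [Beneficial]

def load (π : J → ℕ) (s : J → M) (j : J) : ℕ := #{x | s x = s j ∧ π x ≤ π j}

def score (f : J → ℕ) (j : J) : ℕ := #{x | f x < f j} + #{x | f x ≤ f j}

def prefixLoad (π : J → ℕ) (s : J → M) (b : M) (t : ℕ) : ℕ := #{x | s x = b ∧ π x < t}

section Unit

variable (π : J → ℕ) (s : J → M) (j : J)

theorem Ctime_unit : Ctime (fun _ => 1) (fun _ => 1) (fun _ => π) s j = load π s j := by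
  simp [Ctime, load]

theorem rankOf_unit :
    rankOf (fun _ => 1) (fun _ => 1) (fun _ => π) s j = ((score (load π s) j : ℝ) + 1) / 2 := by
  have hle (f : J → ℕ) : #{x | f x ≤ f j} = #{x | f x < f j} + #{x | f x = f j} := by
    rw [← card_union_of_disjoint (disjoint_filter.2 fun x _ h => h.ne), ← filter_or]
    simp only [le_iff_lt_or_eq]
  simp only [rankOf, Ctime_unit, Nat.cast_lt, Nat.cast_inj, score, hle]
  push_cast
  ring

theorem beneficial_unit_iff [DecidableEq J] (i : M) :
    Beneficial (fun _ => 1) (fun _ => 1) (fun _ => π) s j i ↔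
      score (load π (update s j i)) j < score (load π s) j ∨
        score (load π (update s j i)) j = score (load π s) j ∧
          load π (update s j i) j < load π s j := by
  simp only [Beneficial, rankOf_unit, Ctime_unit, div_lt_div_iff_of_pos_right (two_pos : (0:ℝ) < 2),
    add_lt_add_iff_right, Nat.cast_lt, div_left_inj' (two_ne_zero : (2:ℝ) ≠ 0), add_left_inj,
    Nat.cast_inj]
  congr!

end Unit

section Score

variable {f g : J → ℕ} {j : J}

theorem score_le_score_of_perm (σ : Equiv.Perm J) (hlt : ∀ x, f x < f j → g (σ x) < g j)
    (hle : ∀ x, f x ≤ f j → g (σ x) ≤ g j) : score f j ≤ score g j := by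
  unfold score
  rw [← card_filter_comp_equiv σ (fun y => g y < g j),
    ← card_filter_comp_equiv σ (fun y => g y ≤ g j)]
  exact add_le_add (card_le_card fun x => by simpa using hlt x)
    (card_le_card fun x => by simpa using hle x)

theorem score_lt_score (hlt : ∀ x, f x < f j → g x < g j) (hle : ∀ x, f x ≤ f j → g x ≤ g j)
    (y : J) (hy : f j ≤ f y ∧ g y < g j ∨ f j < f y ∧ g y ≤ g j) : score f j < score g j := by
  unfold score
  have hsub_lt : ({x | f x < f j} : Finset J) ⊆ ({x | g x < g j} : Finset J) :=
    monotone_filter_right _ fun x _ => hlt x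
  have hsub_le : ({x | f x ≤ f j} : Finset J) ⊆ ({x | g x ≤ g j} : Finset J) :=
    monotone_filter_right _ fun x _ => hle x
  rcases hy with ⟨hfy, hgy⟩ | ⟨hfy, hgy⟩
  · refine add_lt_add_of_lt_of_le (card_lt_card ?_) (card_le_card hsub_le)
    exact (ssubset_iff_of_subset hsub_lt).2 ⟨y, by simpa using hgy, by simpa using hfy⟩
  · refine add_lt_add_of_le_of_lt (card_le_card hsub_lt) (card_lt_card ?_)
    exact (ssubset_iff_of_subset hsub_le).2 ⟨y, by simpa using hgy, by simpa using hfy⟩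

end Score

section Load

variable {π : J → ℕ} {s : J → M} {j x : J} {i b : M}

theorem load_lt_load {y : J} (hs : s x = s y) (hlt : π x < π y) : load π s x < load π s y := by
  refine card_lt_card ((ssubset_iff_of_subset ?_).2 ⟨y, by simp, by simp [hs, hlt]⟩)
  exact monotone_filter_right _ fun z _ hz => ⟨hz.1.trans hs, hz.2.trans hlt.le⟩

theorem eq_of_load_eq (hπ : Injective π) {y : J} (hs : s x = s y)
    (h : load π s x = load π s y) : x = y := by
  by_contra hne
  rcases lt_or_gt_of_ne (hπ.ne hne) with hlt | hlt
  · exact (load_lt_load hs hlt).ne h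
  · exact (load_lt_load hs.symm hlt).ne' h

theorem load_eq_prefixLoad_add_one (hπ : Injective π) :
    load π s j = prefixLoad π s (s j) (π j) + 1 := by
  have h : ({x | s x = s j ∧ π x ≤ π j} : Finset J) =
      insert j ({x | s x = s j ∧ π x < π j} : Finset J) := by
    ext x
    simp only [mem_filter, mem_univ, true_and, mem_insert, le_iff_lt_or_eq]
    constructor
    · rintro ⟨hx, hlt | heq⟩
      exacts [Or.inr ⟨hx, hlt⟩, Or.inl (hπ heq)]
    · rintro (rfl | ⟨hx, hlt⟩)
      exacts [⟨rfl, Or.inr rfl⟩, ⟨hx, Or.inl hlt⟩]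
  rw [load, prefixLoad, h, card_insert_of_notMem (by simp)]

theorem exists_load_eq_prefixLoad {t : ℕ} (h : 0 < prefixLoad π s b t) :
    ∃ y, s y = b ∧ π y < t ∧ load π s y = prefixLoad π s b t := by
  obtain ⟨y, hy, hmax⟩ := exists_max_image _ π (card_pos.1 h)
  simp only [mem_filter, mem_univ, true_and] at hy hmax
  refine ⟨y, hy.1, hy.2, congr_arg card ?_⟩
  ext z
  simp only [mem_filter, mem_univ, true_and, hy.1]
  exact ⟨fun hz => ⟨hz.1, hz.2.trans_lt hy.2⟩, fun hz => ⟨hz.1, hmax z hz⟩⟩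

theorem load_update_add [DecidableEq J] (hx : x ≠ j) :
    load π (update s j i) x + (if s j = s x ∧ π j ≤ π x then 1 else 0) =
      load π s x + (if i = s x ∧ π j ≤ π x then 1 else 0) := by
  simp only [load, card_filter, update_of_ne hx]
  rw [← add_sum_erase _ _ (mem_univ j), ← add_sum_erase _ _ (mem_univ j),
    sum_congr rfl fun y hy => by rw [update_of_ne (ne_of_mem_erase hy)]]
  simp only [update_self]
  ring

theorem load_update_self [DecidableEq J] [DecidableEq M] (hi : i ≠ s j) :
    load π (update s j i) j = #{y | s y = i ∧ π y ≤ π j} + 1 := by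
  rw [← card_insert_of_notMem (s := ({y | s y = i ∧ π y ≤ π j} : Finset J)) (a := j)
    (by simp [hi.symm]), load]
  congr 1
  ext y
  by_cases hy : y = j <;> simp [hy]

end Load

section Deviation

variable {π : J → ℕ} {s : J → M} {j : J} {i : M}

theorem beneficial_of_prefixLoad_lt (hπ : Injective π) (hi : i ≠ s j)
    (h : prefixLoad π s i (π j) < prefixLoad π s (s j) (π j)) :
    Beneficial (fun _ => 1) (fun _ => 1) (fun _ => π) s j i := by
  have hgj : load π (update s j i) j = prefixLoad π s i (π j) + 1 := by
    rw [load_update_self hi, prefixLoad]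
    congr 2
    refine filter_congr fun y _ => and_congr_right fun hy => ⟨fun hle => ?_, fun hlt => hlt.le⟩
    exact hle.lt_of_ne fun heq => hi (hπ heq ▸ hy).symm
  have hfj : load π s j = prefixLoad π s (s j) (π j) + 1 := load_eq_prefixLoad_add_one hπ
  have hdrop : ∀ x ≠ j, load π s x ≤ load π (update s j i) x + 1 := fun x hx => by
    have := load_update_add (π := π) (s := s) (i := i) hx
    split_ifs at this <;> omega
  obtain ⟨y, -, hyj, hfy⟩ := exists_load_eq_prefixLoad (by omega : 0 < prefixLoad π s (s j) (π j))
  have hgy : load π (update s j i) y = load π s y := by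
    have := load_update_add (π := π) (s := s) (i := i) (ne_of_apply_ne π hyj.ne)
    simp only [not_le.2 hyj, and_false, if_false] at this
    omega
  rw [beneficial_unit_iff]
  refine Or.inl (score_lt_score (fun x hx => ?_) (fun x hx => ?_) y (Or.inl ⟨by omega, by omega⟩))
  · rcases eq_or_ne x j with rfl | hxj
    · exact absurd hx (lt_irrefl _)
    · have := hdrop x hxj
      omega
  · rcases eq_or_ne x j with rfl | hxj
    · exact le_rfl
    · have := hdrop x hxj
      omega

-- `j` moves in just ahead of `k`: its completion time is unchanged and `k` leaves its tie.
theorem beneficial_of_overtake {k : J} (hjk : π j < π k) (hs : s k ≠ s j)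
    (hload : load π s k = load π s j) (hj : ∀ x, s x = s j → π j ≤ π x → x = j)
    (hk : ∀ x, s x = s k → π j ≤ π x → x = k) :
    Beneficial (fun _ => 1) (fun _ => 1) (fun _ => π) s j (s k) := by
  have hgj : load π (update s j (s k)) j = load π s k := by
    have h : ({y | s y = s k ∧ π y ≤ π k} : Finset J) =
        insert k ({y | s y = s k ∧ π y ≤ π j} : Finset J) := by
      ext y
      simp only [mem_filter, mem_univ, true_and, mem_insert]
      constructor
      · rintro ⟨hy, hyk⟩
        rcases le_or_gt (π y) (π j) with hyj | hyj
        exacts [Or.inr ⟨hy, hyj⟩, Or.inl (hk y hy hyj.le)]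
      · rintro (rfl | ⟨hy, hyj⟩)
        exacts [⟨rfl, le_rfl⟩, ⟨hy, hyj.trans hjk.le⟩]
    rw [load_update_self hs, show load π s k = _ from congr_arg card h,
      card_insert_of_notMem (by simp [hjk])]
  have hgk : load π (update s j (s k)) k = load π s k + 1 := by
    have := load_update_add (π := π) (s := s) (i := s k) (ne_of_apply_ne π hjk.ne')
    rw [if_neg fun h => hs h.1.symm, if_pos ⟨rfl, hjk.le⟩] at this
    omega
  have hg : ∀ x, x ≠ j → x ≠ k → load π (update s j (s k)) x = load π s x := fun x hxj hxk => by
    have := load_update_add (π := π) (s := s) (i := s k) hxj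
    rw [if_neg fun h => hxj (hj x h.1.symm h.2), if_neg fun h => hxk (hk x h.1.symm h.2)] at this
    omega
  rw [beneficial_unit_iff]
  refine Or.inl (score_lt_score (fun x hx => ?_) (fun x hx => ?_) k (Or.inr ⟨by omega, by omega⟩))
  · rcases eq_or_ne x j with rfl | hxj
    · exact absurd hx (lt_irrefl _)
    rcases eq_or_ne x k with rfl | hxk
    · omega
    · have := hg x hxj hxk
      omega
  · rcases eq_or_ne x j with rfl | hxj
    · exact le_rfl
    rcases eq_or_ne x k with rfl | hxk
    · omega
    · have := hg x hxj hxk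
      omega

end Deviation

section Equilibrium

variable {π : J → ℕ} {s : J → M}

theorem prefixLoad_le_of_isNE (hπ : Injective π)
    (hs : IsNE (fun _ => 1) (fun _ => 1) (fun _ => π) s) (j : J) (b : M) :
    prefixLoad π s (s j) (π j) ≤ prefixLoad π s b (π j) := by
  by_cases hb : b = s j
  · rw [hb]
  · exact not_lt.1 fun h => hs j b (beneficial_of_prefixLoad_lt hπ hb h)

variable (hπ : Injective π) (hmin : ∀ j b, prefixLoad π s (s j) (π j) ≤ prefixLoad π s b (π j))
include hπ hmin

theorem prefixLoad_le_prefixLoad_add_one (b b' : M) (t : ℕ) :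
    prefixLoad π s b t ≤ prefixLoad π s b' t + 1 := by
  by_contra! h
  obtain ⟨y, hyb, hyt, hy⟩ := exists_load_eq_prefixLoad (by omega : 0 < prefixLoad π s b t)
  have hy_min := hmin y b'
  have hmono : prefixLoad π s b' (π y) ≤ prefixLoad π s b' t :=
    card_le_card (monotone_filter_right _ fun x _ hx => ⟨hx.1, hx.2.trans hyt⟩)
  rw [load_eq_prefixLoad_add_one hπ, hyb] at hy
  rw [hyb] at hy_min
  omega

theorem prefixLoad_eq_div [Fintype M] (j : J) :
    prefixLoad π s (s j) (π j) = #{x | π x < π j} / Fintype.card M := by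
  set c := prefixLoad π s (s j) (π j)
  have hsum : ∑ b, prefixLoad π s b (π j) = #{x | π x < π j} := by
    rw [card_eq_sum_card_fiberwise (f := s) (t := univ) fun _ _ => mem_univ _]
    refine sum_congr rfl fun b _ => ?_
    rw [filter_filter, prefixLoad]
    simp only [and_comm]
  refine (Nat.div_eq_of_lt_le ?_ ?_).symm
  · calc c * Fintype.card M = ∑ _b : M, c := by simp [mul_comm]
      _ ≤ ∑ b, prefixLoad π s b (π j) := sum_le_sum fun b _ => hmin j b
      _ = _ := hsum
  · calc #{x | π x < π j} = ∑ b, prefixLoad π s b (π j) := hsum.symm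
      _ < ∑ _b : M, (c + 1) := sum_lt_sum
          (fun b _ => prefixLoad_le_prefixLoad_add_one hπ hmin b (s j) (π j))
          ⟨s j, mem_univ _, lt_add_one c⟩
      _ = (c + 1) * Fintype.card M := by simp [mul_comm]

end Equilibrium

theorem load_eq_of_isNE [Fintype M] {n : ℕ} {s : Fin n → M}
    (hs : IsNE (fun _ => 1) (fun _ => 1) (fun _ => Fin.val) s) (x : Fin n) :
    load Fin.val s x = x / Fintype.card M + 1 := by
  rw [load_eq_prefixLoad_add_one Fin.val_injective,
    prefixLoad_eq_div Fin.val_injective (prefixLoad_le_of_isNE Fin.val_injective hs),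
    Fin.card_filter_val_lt, min_eq_right x.isLt.le]

theorem div_eq_of_mul_le_of_lt_add {q m x : ℕ} (h₁ : q * m ≤ x) (h₂ : x < q * m + m) :
    x / m = q :=
  Nat.div_eq_of_lt_le h₁ (by rwa [add_one_mul])

section Balanced

variable {n m : ℕ} {s : Fin n → M} (hb : ∀ x : Fin n, load Fin.val s x = (x : ℕ) / m + 1)
include hb

theorem ne_of_div_eq {x y : Fin n} (hxy : x ≠ y) (h : (x : ℕ) / m = (y : ℕ) / m) : s x ≠ s y :=
  fun hs => hxy (eq_of_load_eq Fin.val_injective hs (by rw [hb, hb, h]))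

theorem beneficial_of_block {j k : Fin n} (hjk : j < k) (hblock : (j : ℕ) / m = (k : ℕ) / m)
    (hlater : ∀ x : Fin n, (k : ℕ) / m < (x : ℕ) / m → s x ≠ s j ∧ s x ≠ s k) :
    Beneficial (fun _ => 1) (fun _ => 1) (fun _ => Fin.val) s j (s k) := by
  refine beneficial_of_overtake hjk (ne_of_div_eq hb hjk.ne' hblock.symm) (by rw [hb, hb, hblock])
    (fun x hx hjx => ?_) (fun x hx hjx => ?_)
  all_goals
    by_contra hne
    rcases (Nat.div_le_div_right (c := m) hjx).eq_or_lt with h | h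
  · exact ne_of_div_eq hb hne h.symm hx
  · exact (hlater x (hblock ▸ h)).1 hx
  · exact ne_of_div_eq hb hne (h.symm.trans hblock) hx
  · exact (hlater x (hblock ▸ h)).2 hx

theorem beneficial_of_last_block {j k : Fin n} (hjk : j < k) (hblock : (j : ℕ) / m = (k : ℕ) / m)
    (hlast : (n - 1) / m ≤ (k : ℕ) / m) :
    Beneficial (fun _ => 1) (fun _ => 1) (fun _ => Fin.val) s j (s k) :=
  beneficial_of_block hb hjk hblock fun x hx =>
    absurd (Nat.div_le_div_right (c := m) (Nat.le_sub_one_of_lt x.isLt)) (by omega)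

theorem beneficial_of_avoid_last {q : ℕ} (hn : n = (q + 1) * m + 1) (hm : 0 < m) {j k t : Fin n}
    (ht : (t : ℕ) = n - 1) (hjk : j < k) (hj : (j : ℕ) / m = q) (hk : (k : ℕ) / m = q)
    (hjt : s j ≠ s t) (hkt : s k ≠ s t) :
    Beneficial (fun _ => 1) (fun _ => 1) (fun _ => Fin.val) s j (s k) := by
  refine beneficial_of_block hb hjk (hj.trans hk.symm) fun x hx => ?_
  have hx' : (q + 1) * m ≤ x := (Nat.le_div_iff_mul_le hm).1 (hk ▸ hx)
  rw [show x = t from Fin.ext (by omega)]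
  exact ⟨hjt.symm, hkt.symm⟩

theorem exists_beneficial_of_last_singleton {q : ℕ} (hn : n = (q + 1) * m + 1) (hm : 3 ≤ m) :
    ∃ j i, Beneficial (fun _ => 1) (fun _ => 1) (fun _ => Fin.val) s j i := by
  have hn₁ : n = q * m + m + 1 := by rw [hn, add_one_mul]
  obtain ⟨t, ht⟩ : ∃ t : Fin n, (t : ℕ) = n - 1 := ⟨⟨_, by omega⟩, rfl⟩
  obtain ⟨x₀, h₀⟩ : ∃ x : Fin n, (x : ℕ) = q * m := ⟨⟨_, by omega⟩, rfl⟩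
  obtain ⟨x₁, h₁⟩ : ∃ x : Fin n, (x : ℕ) = q * m + 1 := ⟨⟨_, by omega⟩, rfl⟩
  obtain ⟨x₂, h₂⟩ : ∃ x : Fin n, (x : ℕ) = q * m + 2 := ⟨⟨_, by omega⟩, rfl⟩
  have hq₀ : (x₀ : ℕ) / m = q := div_eq_of_mul_le_of_lt_add (by omega) (by omega)
  have hq₁ : (x₁ : ℕ) / m = q := div_eq_of_mul_le_of_lt_add (by omega) (by omega)
  have hq₂ : (x₂ : ℕ) / m = q := div_eq_of_mul_le_of_lt_add (by omega) (by omega)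
  have h₀₁ : x₀ < x₁ := Fin.lt_def.2 (by omega)
  have h₀₂ : x₀ < x₂ := Fin.lt_def.2 (by omega)
  have h₁₂ : x₁ < x₂ := Fin.lt_def.2 (by omega)
  -- the jobs `x₀, x₁, x₂` lie on distinct machines, so two of them avoid the last job's machine
  by_cases hs₀ : s x₀ = s t
  · exact ⟨_, _, beneficial_of_avoid_last hb hn (by omega) ht h₁₂ hq₁ hq₂
      (fun h => ne_of_div_eq hb h₀₁.ne' (hq₁.trans hq₀.symm) (h.trans hs₀.symm))
      (fun h => ne_of_div_eq hb h₀₂.ne' (hq₂.trans hq₀.symm) (h.trans hs₀.symm))⟩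
  by_cases hs₁ : s x₁ = s t
  · exact ⟨_, _, beneficial_of_avoid_last hb hn (by omega) ht h₀₂ hq₀ hq₂ hs₀
      (fun h => ne_of_div_eq hb h₁₂.ne' (hq₂.trans hq₁.symm) (h.trans hs₁.symm))⟩
  · exact ⟨_, _, beneficial_of_avoid_last hb hn (by omega) ht h₀₁ hq₀ hq₁ hs₀ hs₁⟩

theorem exists_beneficial_of_balanced (hn : 2 ≤ n) (hm : 2 ≤ m) (hodd : ¬(m = 2 ∧ Odd n)) :
    ∃ j i, Beneficial (fun _ => 1) (fun _ => 1) (fun _ => Fin.val) s j i := by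
  obtain ⟨r, hr⟩ : ∃ r, (n - 1) / m = r := ⟨_, rfl⟩
  have hr₁ : r * m ≤ n - 1 := hr ▸ Nat.div_mul_le_self _ _
  have hr₂ : n - 1 < r * m + m := by
    simpa [hr, mul_add_one, mul_comm] using Nat.lt_mul_div_succ (n - 1) (by omega : 0 < m)
  by_cases hA : r * m + 1 < n
  · obtain ⟨j, hj⟩ : ∃ j : Fin n, (j : ℕ) = r * m := ⟨⟨_, by omega⟩, rfl⟩
    obtain ⟨k, hk⟩ : ∃ k : Fin n, (k : ℕ) = r * m + 1 := ⟨⟨_, hA⟩, rfl⟩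
    have hjr : (j : ℕ) / m = r := div_eq_of_mul_le_of_lt_add (by omega) (by omega)
    have hkr : (k : ℕ) / m = r := div_eq_of_mul_le_of_lt_add (by omega) (by omega)
    exact ⟨j, s k, beneficial_of_last_block hb (Fin.lt_def.2 (by omega)) (hjr.trans hkr.symm)
      (by omega)⟩
  obtain ⟨q, rfl⟩ : ∃ q, r = q + 1 :=
    Nat.exists_eq_add_one.2 (Nat.pos_of_ne_zero (by rintro rfl; omega))
  have hn' : n = (q + 1) * m + 1 := by omega
  refine exists_beneficial_of_last_singleton hb hn' (not_lt.1 fun hm3 => hodd ⟨by omega, ?_⟩)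
  exact ⟨q + 1, by rw [hn', show m = 2 by omega]; ring⟩

end Balanced

def alternating (n : ℕ) : Fin n → Fin 2 := fun x => ⟨x % 2, Nat.mod_lt _ two_pos⟩

section Alternating

variable {n : ℕ}

theorem alternating_val (x : Fin n) : (alternating n x : ℕ) = x % 2 := rfl

theorem card_mod_two_eq_le (x : Fin n) {c : ℕ} (hc : c < 2) :
    #{y : Fin n | (y : ℕ) % 2 = c ∧ (y : ℕ) ≤ x} = ((x : ℕ) + 2 - c) / 2 := by
  rw [← card_range ((x + 2 - c) / 2)]
  refine card_bij (fun y _ => (y : ℕ) / 2) (fun y hy => ?_) (fun y hy z hz h => ?_) fun v hv => ?_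
  · simp only [mem_filter, mem_univ, true_and] at hy
    simp only [mem_range]
    omega
  · simp only [mem_filter, mem_univ, true_and] at hy hz
    exact Fin.ext (by omega)
  · simp only [mem_range] at hv
    exact ⟨⟨2 * v + c, by omega⟩, by simp only [mem_filter, mem_univ, true_and]; omega,
      by simp only; omega⟩

theorem load_alternating (x : Fin n) : load Fin.val (alternating n) x = (x : ℕ) / 2 + 1 := by
  have h : load Fin.val (alternating n) x = #{y : Fin n | (y : ℕ) % 2 = x % 2 ∧ (y : ℕ) ≤ x} := by
    rw [load]
    congr 1
    ext y
    simp only [mem_filter, mem_univ, true_and, Fin.ext_iff, alternating_val]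
  rw [h, card_mod_two_eq_le x (Nat.mod_lt _ two_pos)]
  omega

theorem load_update_alternating {j : Fin n} {i : Fin 2} (hi : i ≠ alternating n j) (x : Fin n) :
    load Fin.val (update (alternating n) j i) x =
      if (x : ℕ) < j then (x : ℕ) / 2 + 1
      else if (x : ℕ) = j then ((j : ℕ) + 1 + j % 2) / 2 + 1
      else if (x : ℕ) % 2 = j % 2 then (x : ℕ) / 2 else (x : ℕ) / 2 + 2 := by
  have hi' : (i : ℕ) = 1 - j % 2 := by
    have := i.isLt
    have : (i : ℕ) ≠ j % 2 := fun h => hi (Fin.ext h)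
    omega
  by_cases hxj : x = j
  · subst hxj
    have h : #{y | alternating n y = i ∧ (y : ℕ) ≤ x} =
        #{y : Fin n | (y : ℕ) % 2 = i ∧ (y : ℕ) ≤ x} := by
      congr 1
      ext y
      simp only [mem_filter, mem_univ, true_and, Fin.ext_iff, alternating_val]
    rw [load_update_self hi, h, card_mod_two_eq_le x i.isLt]
    simp only [lt_irrefl, if_false, if_true]
    omega
  · have h := load_update_add (π := Fin.val) (s := alternating n) (i := i) hxj
    have hxj' : (x : ℕ) ≠ j := Fin.val_ne_of_ne hxj
    simp only [Fin.ext_iff, alternating_val, load_alternating] at h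
    split_ifs at h ⊢ <;> omega

theorem score_le_score_update_alternating (hn : Odd n) {j : Fin n} {i : Fin 2}
    (hi : i ≠ alternating n j) :
    score (load Fin.val (alternating n)) j ≤
      score (load Fin.val (update (alternating n) j i)) j := by
  obtain ⟨k, rfl⟩ := hn
  by_cases hswap : (j : ℕ) % 2 = 0 ∧ (j : ℕ) + 2 < 2 * k + 1
  · -- `j + 1` drops out of the tie with `j` exactly as `j + 2` joins it; `n` odd makes both exist
    obtain ⟨a, ha⟩ : ∃ a : Fin (2 * k + 1), (a : ℕ) = j + 1 := ⟨⟨_, by omega⟩, rfl⟩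
    obtain ⟨b, hb⟩ : ∃ b : Fin (2 * k + 1), (b : ℕ) = j + 2 := ⟨⟨_, by omega⟩, rfl⟩
    refine score_le_score_of_perm (Equiv.swap a b) (fun x hx => ?_) (fun x hx => ?_) <;>
      rw [load_alternating, load_alternating] at hx
    · rw [Equiv.swap_apply_of_ne_of_ne (Fin.ne_of_val_ne (by omega)) (Fin.ne_of_val_ne (by omega)),
        load_update_alternating hi, load_update_alternating hi]
      split_ifs <;> omega
    · by_cases hxa : x = a
      · rw [hxa, Equiv.swap_apply_left, load_update_alternating hi, load_update_alternating hi]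
        split_ifs <;> omega
      · rw [Equiv.swap_apply_of_ne_of_ne hxa (Fin.ne_of_val_ne (by omega)),
          load_update_alternating hi, load_update_alternating hi]
        split_ifs <;> omega
  · refine score_le_score_of_perm (Equiv.refl _) (fun x hx => ?_) (fun x hx => ?_) <;>
    · rw [load_alternating, load_alternating] at hx
      rw [Equiv.refl_apply, load_update_alternating hi, load_update_alternating hi]
      have := x.isLt
      split_ifs <;> omega

theorem isNE_alternating (hn : Odd n) :
    IsNE (fun _ => 1) (fun _ => 1) (fun _ => Fin.val) (alternating n) := by
  intro j i
  by_cases hi : i = alternating n j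
  · rw [hi]
    exact not_beneficial_self _ _ _ _ _
  have hscore := score_le_score_update_alternating hn hi
  have hload : load Fin.val (alternating n) j ≤ load Fin.val (update (alternating n) j i) j := by
    rw [load_alternating, load_update_alternating hi]
    simp only [lt_irrefl, if_false, if_true]
    omega
  rw [beneficial_unit_iff]
  omega

end Alternating

/-- With a global priority list, unit jobs on identical machines: a NE exists
iff `m = 2` and `n` is odd. -/
theorem global_NE_iff (n m : ℕ) (hn : 2 ≤ n) (hm : 2 ≤ m)
    (π : Fin n → ℕ) (hπ : Function.Injective π) :
    (∃ s : Fin n → Fin m,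
      IsNE (fun _ => (1:ℝ)) (fun _ => (1:ℝ)) (fun _ => π) s) ↔ (m = 2 ∧ Odd n) := by
  set e := Tuple.sort π
  have hsort : StrictMono (π ∘ e) :=
    (Tuple.monotone_sort π).strictMono_of_injective (hπ.comp e.injective)
  have hrelabel (s : Fin n → Fin m) :
      IsNE (fun _ => 1) (fun _ => 1) (fun _ => π) s ↔
        IsNE (fun _ => 1) (fun _ => 1) (fun _ => Fin.val) (s ∘ e) :=
    isNE_comp_equiv (π := fun _ => π) (π' := fun _ => Fin.val) e (fun _ _ _ => hsort.le_iff_le)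
      (fun _ => 1) (fun _ => 1) s
  constructor
  · rintro ⟨s, hs⟩
    by_contra hodd
    have hb (x : Fin n) : load Fin.val (s ∘ e) x = (x : ℕ) / m + 1 := by
      rw [load_eq_of_isNE ((hrelabel s).1 hs), Fintype.card_fin]
    obtain ⟨j, i, hj⟩ := exists_beneficial_of_balanced hb hn hm hodd
    exact (hrelabel s).1 hs j i hj
  · rintro ⟨rfl, hodd⟩
    refine ⟨alternating n ∘ e.symm, (hrelabel _).2 ?_⟩
    rw [Function.comp_assoc, e.symm_comp_self, Function.comp_id]
    exact isNE_alternating hodd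
end
end

section
/- Consider a scheduling game with rank-based utilities on two identical machines with n unit jobs and arbitrary (possibly different) priority lists π₁, π₂. If n is odd, then the game admits a pure Nash equilibrium. -/
open Finset
open scoped Classical

noncomputable section

variable {J M : Type*} [Fintype J]

namespace OddNEAux

variable {J : Type*} [Fintype J]

def posIn (π : J → ℕ) (A : Finset J) (j : J) : ℕ := (A.filter fun j' => π j' ≤ π j).card

omit [Fintype J]

lemma posIn_pos {π : J → ℕ} {A : Finset J} {j : J} (hj : j ∈ A) : 1 ≤ posIn π A j :=
  Finset.card_pos.2 ⟨j, Finset.mem_filter.2 ⟨hj, le_refl _⟩⟩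

lemma posIn_le (π : J → ℕ) (A : Finset J) (j : J) : posIn π A j ≤ A.card :=
  Finset.card_le_card (Finset.filter_subset _ _)

lemma posIn_lt_posIn {π : J → ℕ} {A : Finset J} {j1 j2 : J} (h2 : j2 ∈ A) (h : π j1 < π j2) :
    posIn π A j1 < posIn π A j2 := by
  apply Finset.card_lt_card
  refine (Finset.ssubset_iff_of_subset
      (Finset.monotone_filter_right A (fun x _ hx => le_trans hx h.le))).2
    ⟨j2, Finset.mem_filter.2 ⟨h2, le_refl _⟩, fun hc => absurd ((Finset.mem_filter.1 hc).2) (not_le.2 h)⟩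

lemma posIn_injOn {π : J → ℕ} (hπ : Function.Injective π) (A : Finset J) :
    Set.InjOn (posIn π A) A := by
  intro x hx y hy hxy
  by_contra hne
  have hπne : π x ≠ π y := fun h => hne (hπ h)
  rcases lt_or_gt_of_ne hπne with h | h
  · exact absurd hxy (Nat.ne_of_lt (posIn_lt_posIn hy h))
  · exact absurd hxy.symm (Nat.ne_of_lt (posIn_lt_posIn hx h))

lemma image_posIn {π : J → ℕ} (hπ : Function.Injective π) (A : Finset J) :
    A.image (posIn π A) = Finset.Icc 1 A.card := by
  apply Finset.eq_of_subset_of_card_le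
  · intro v hv
    rcases Finset.mem_image.1 hv with ⟨j, hj, rfl⟩
    exact Finset.mem_Icc.2 ⟨posIn_pos hj, posIn_le π A j⟩
  · rw [Nat.card_Icc, Finset.card_image_of_injOn (posIn_injOn hπ A)]
    omega

lemma count_lt {π : J → ℕ} (hπ : Function.Injective π) (A : Finset J) (t : ℕ) :
    (A.filter fun j => posIn π A j < t).card = min (t - 1) A.card := by
  have hsub : (A.filter fun j => posIn π A j < t) ⊆ A := Finset.filter_subset _ _
  rw [← Finset.card_image_of_injOn ((posIn_injOn hπ A).mono (Finset.coe_subset.2 hsub))]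
  have himg : (A.filter fun j => posIn π A j < t).image (posIn π A)
      = Finset.Icc 1 (min (t - 1) A.card) := by
    ext v
    simp only [Finset.mem_image, Finset.mem_filter, Finset.mem_Icc]
    constructor
    · rintro ⟨j, ⟨hjA, hjt⟩, rfl⟩
      have h1 := posIn_pos (π := π) hjA
      have h2 := posIn_le π A j
      omega
    · rintro ⟨hv1, hv2⟩
      have hv : v ∈ A.image (posIn π A) := by
        rw [image_posIn hπ A]
        exact Finset.mem_Icc.2 ⟨by omega, by omega⟩
      rcases Finset.mem_image.1 hv with ⟨j, hj, rfl⟩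
      exact ⟨j, ⟨hj, by omega⟩, rfl⟩
  rw [himg, Nat.card_Icc]
  omega

lemma count_eq {π : J → ℕ} (hπ : Function.Injective π) (A : Finset J) (t : ℕ) (ht : 1 ≤ t) :
    (A.filter fun j => posIn π A j = t).card = if t ≤ A.card then 1 else 0 := by
  split_ifs with h
  · have hsub : (A.filter fun j => posIn π A j = t) ⊆ A := Finset.filter_subset _ _
    rw [← Finset.card_image_of_injOn ((posIn_injOn hπ A).mono (Finset.coe_subset.2 hsub))]
    have himg : (A.filter fun j => posIn π A j = t).image (posIn π A) = {t} := by
      ext v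
      simp only [Finset.mem_image, Finset.mem_filter, Finset.mem_singleton]
      constructor
      · rintro ⟨j, ⟨_, hjt⟩, rfl⟩
        exact hjt
      · intro hvt
        subst hvt
        have hv : v ∈ A.image (posIn π A) := by
          rw [image_posIn hπ A]
          exact Finset.mem_Icc.2 ⟨ht, h⟩
        rcases Finset.mem_image.1 hv with ⟨j, hj, hjt⟩
        exact ⟨j, ⟨hj, hjt⟩, hjt⟩
    rw [himg, Finset.card_singleton]
  · rw [Finset.card_eq_zero, Finset.filter_eq_empty_iff]
    intro j hj
    have := posIn_le π A j
    omega

section TwoMachines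

variable {J : Type*} [Fintype J]

/-- the set of jobs assigned to machine `i` -/
def mset (s : J → Fin 2) (i : Fin 2) : Finset J := univ.filter fun j => s j = i

lemma mem_mset {s : J → Fin 2} {i : Fin 2} {j : J} : j ∈ mset s i ↔ s j = i := by
  simp [mset]

lemma fin2_cases (i : Fin 2) (x : Fin 2) : x = i ∨ x = 1 - i := by
  revert i x; decide

lemma fin2_ne (i : Fin 2) : i ≠ 1 - i := by
  revert i; decide

lemma fin2_other {i i' : Fin 2} (h : i' ≠ i) : 1 - i' = i := by
  revert h; revert i i'; decide

lemma mset_cover (s : J → Fin 2) (i : Fin 2) : mset s i ∪ mset s (1 - i) = univ := by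
  ext x
  simp only [Finset.mem_union, Finset.mem_univ, iff_true, mem_mset]
  exact fin2_cases i (s x)

lemma mset_disj (s : J → Fin 2) {i o : Fin 2} (h : i ≠ o) : Disjoint (mset s i) (mset s o) := by
  rw [Finset.disjoint_left]
  intro x hx hx'
  exact h ((mem_mset.1 hx).symm.trans (mem_mset.1 hx'))

lemma Ctime_eq (π : Fin 2 → J → ℕ) (s : J → Fin 2) (j : J) :
    Ctime (fun _ => (1:ℝ)) (fun _ => (1:ℝ)) π s j = posIn (π (s j)) (mset s (s j)) j := by
  unfold Ctime posIn mset
  simp only [Finset.filter_filter, Finset.filter_congr_decidable, Finset.sum_const,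
    nsmul_eq_mul, mul_one, div_one]
  congr!

/-- twice the rank, as a natural number, in terms of the job's position `t`,
its machine's load `a`, and the other machine's load `b`. -/
def natRank (t a b : ℕ) : ℕ :=
  2 * min (t - 1) a + 2 * min (t - 1) b + (if t ≤ a then 1 else 0) + (if t ≤ b then 1 else 0) + 1

lemma rank_eq (π : Fin 2 → J → ℕ) (hπ : ∀ i, Function.Injective (π i)) (s : J → Fin 2) (j : J) :
    rankOf (fun _ => (1:ℝ)) (fun _ => (1:ℝ)) π s j =
      (natRank (posIn (π (s j)) (mset s (s j)) j) (mset s (s j)).card (mset s (1 - s j)).card : ℝ) / 2 := by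
  set i := s j with hi
  set o := 1 - i with ho
  have hio : i ≠ o := by rw [ho]; exact fin2_ne i
  set t := posIn (π i) (mset s i) j with htdef
  have hjA : j ∈ mset s i := mem_mset.2 rfl
  have ht1 : 1 ≤ t := posIn_pos hjA
  -- counting per machine
  have hCt : ∀ (i'' : Fin 2) (j' : J), j' ∈ mset s i'' →
      Ctime (fun _ => (1:ℝ)) (fun _ => (1:ℝ)) π s j' = (posIn (π i'') (mset s i'') j' : ℝ) := by
    intro i'' j' hj'
    rw [Ctime_eq π s j', mem_mset.1 hj']
  have hCj : Ctime (fun _ => (1:ℝ)) (fun _ => (1:ℝ)) π s j = (t : ℝ) := hCt i j hjA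
  have split : ∀ (P : J → Prop),
      (univ.filter P).card = ((mset s i).filter P).card + ((mset s o).filter P).card := by
    intro P
    rw [← Finset.card_union_of_disjoint
        (Finset.disjoint_filter_filter (mset_disj s hio)),
      ← Finset.filter_union, mset_cover s i]
  have c1 : (univ.filter fun j' => Ctime (fun _ => (1:ℝ)) (fun _ => (1:ℝ)) π s j' <
      Ctime (fun _ => (1:ℝ)) (fun _ => (1:ℝ)) π s j).card = min (t-1) (mset s i).card + min (t-1) (mset s o).card := by
    rw [split]
    congr 1
    · rw [Finset.filter_congr (fun x hx => by rw [hCt i x hx, hCj, Nat.cast_lt])]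
      exact count_lt (hπ i) (mset s i) t
    · rw [Finset.filter_congr (fun x hx => by rw [hCt o x hx, hCj, Nat.cast_lt])]
      exact count_lt (hπ o) (mset s o) t
  have c2 : (univ.filter fun j' => Ctime (fun _ => (1:ℝ)) (fun _ => (1:ℝ)) π s j' =
      Ctime (fun _ => (1:ℝ)) (fun _ => (1:ℝ)) π s j).card =
      (if t ≤ (mset s i).card then 1 else 0) + (if t ≤ (mset s o).card then 1 else 0) := by
    rw [split]
    congr 1
    · rw [Finset.filter_congr (fun x hx => by rw [hCt i x hx, hCj, Nat.cast_inj])]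
      exact count_eq (hπ i) (mset s i) t ht1
    · rw [Finset.filter_congr (fun x hx => by rw [hCt o x hx, hCj, Nat.cast_inj])]
      exact count_eq (hπ o) (mset s o) t ht1
  unfold rankOf
  rw [c1, c2, natRank]
  push_cast [apply_ite (Nat.cast : ℕ → ℝ)]
  ring

end TwoMachines

section Deviation

variable {J : Type*} [Fintype J]

lemma mset_update_self {s : J → Fin 2} {j : J} {i' : Fin 2} (h : s j ≠ i') :
    mset (Function.update s j i') i' = insert j (mset s i') := by
  ext x
  simp only [mem_mset, Finset.mem_insert]
  rcases eq_or_ne x j with rfl | hx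
  · simp [Function.update_self]
  · rw [Function.update_of_ne hx]
    constructor
    · exact fun h' => Or.inr h'
    · rintro (rfl | h')
      · exact absurd rfl hx
      · exact h'

lemma mset_update_other {s : J → Fin 2} {j : J} {i' : Fin 2} (h : s j ≠ i') :
    mset (Function.update s j i') (s j) = (mset s (s j)).erase j := by
  ext x
  simp only [mem_mset, Finset.mem_erase]
  rcases eq_or_ne x j with rfl | hx
  · simp [Function.update_self]
    exact fun h' => h h'.symm
  · simp [Function.update_of_ne hx, hx]

lemma card_insert_notmem {A : Finset J} {j : J} (h : j ∉ A) :
    (insert j A).card = A.card + 1 := Finset.card_insert_of_notMem h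

lemma card_erase_mem {A : Finset J} {j : J} (h : j ∈ A) :
    (A.erase j).card = A.card - 1 := Finset.card_erase_of_mem h

lemma posIn_insert {π : J → ℕ} {B : Finset J} {j : J} (hj : j ∉ B) :
    posIn π (insert j B) j = (B.filter fun x => π x ≤ π j).card + 1 := by
  unfold posIn
  rw [Finset.filter_insert, if_pos (le_refl _),
    Finset.card_insert_of_notMem (fun hc => hj (Finset.filter_subset _ _ hc))]

lemma natRank_mono {t t' a b : ℕ} (ht : 1 ≤ t) (h : t ≤ t') : natRank t a b ≤ natRank t' a b := by
  unfold natRank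
  simp only [min_def]
  split_ifs <;> omega

lemma natRank_move {t t' k : ℕ} (ht : 1 ≤ t) (htk : t ≤ k) (h : t + 1 ≤ t') :
    natRank t k (k+1) ≤ natRank t' (k+2) (k-1) := by
  unfold natRank
  simp only [min_def]
  split_ifs <;> omega

/-- the general sufficient condition: nobody wants to move -/
lemma not_beneficial (π : Fin 2 → J → ℕ) (hπ : ∀ i, Function.Injective (π i))
    (s : J → Fin 2) (j : J) (i' : Fin 2)
    (hrank : natRank (posIn (π (s j)) (mset s (s j)) j) (mset s (s j)).card (mset s (1 - s j)).card ≤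
      natRank (posIn (π (Function.update s j i' j)) (mset (Function.update s j i') (Function.update s j i' j)) j)
        (mset (Function.update s j i') (Function.update s j i' j)).card
        (mset (Function.update s j i') (1 - Function.update s j i' j)).card)
    (hC : posIn (π (s j)) (mset s (s j)) j ≤
      posIn (π (Function.update s j i' j)) (mset (Function.update s j i') (Function.update s j i' j)) j) :
    ¬ Beneficial (fun _ => (1:ℝ)) (fun _ => (1:ℝ)) π s j i' := by
  intro hben
  rcases hben with hlt | ⟨heq, hClt⟩
  · rw [rank_eq π hπ s j, rank_eq π hπ (Function.update s j i') j] at hlt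
    have : (natRank (posIn (π (Function.update s j i' j)) (mset (Function.update s j i') (Function.update s j i' j)) j)
        (mset (Function.update s j i') (Function.update s j i' j)).card
        (mset (Function.update s j i') (1 - Function.update s j i' j)).card : ℝ) <
        (natRank (posIn (π (s j)) (mset s (s j)) j) (mset s (s j)).card (mset s (1 - s j)).card : ℝ) := by
      linarith
    rw [Nat.cast_lt] at this
    omega
  · rw [Ctime_eq π s j, Ctime_eq π (Function.update s j i') j, Nat.cast_lt] at hClt
    omega

end Deviation

section Greedy

variable {J : Type*} [Fintype J] [Nonempty J]

/-- pick a `f`-minimal element of `S` -/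
def pick (f : J → ℕ) (S : Finset J) : J :=
  if h : S.Nonempty then (S.exists_min_image f h).choose else Classical.arbitrary J

lemma pick_mem {f : J → ℕ} {S : Finset J} (h : S.Nonempty) : pick f S ∈ S := by
  rw [pick, dif_pos h]
  exact (S.exists_min_image f h).choose_spec.1

lemma pick_min {f : J → ℕ} {S : Finset J} (h : S.Nonempty) :
    ∀ x ∈ S, f (pick f S) ≤ f x := by
  rw [pick, dif_pos h]
  exact (S.exists_min_image f h).choose_spec.2

/-- the machine used at step `m` -/
def mach (m : ℕ) : Fin 2 := if m % 2 = 0 then 0 else 1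

lemma mach_zero_iff (m : ℕ) : mach m = 0 ↔ m % 2 = 0 := by
  constructor
  · intro h1
    by_contra hc
    rw [mach, if_neg hc] at h1
    exact absurd h1 (by decide)
  · intro h1
    rw [mach, if_pos h1]

lemma mach_one_iff (m : ℕ) : mach m = 1 ↔ m % 2 = 1 := by
  constructor
  · intro h1
    by_contra hc
    have h0 : m % 2 = 0 := by omega
    rw [mach, if_pos h0] at h1
    exact absurd h1 (by decide)
  · intro h1
    rw [mach, if_neg (by omega)]

/-- the list of jobs chosen in the first `m` steps -/
def chosen (π : Fin 2 → J → ℕ) : ℕ → List J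
  | 0 => []
  | m+1 => chosen π m ++ [pick (π (mach m)) (univ \ (chosen π m).toFinset)]

/-- the job chosen at step `m` -/
def cjob (π : Fin 2 → J → ℕ) (m : ℕ) : J := pick (π (mach m)) (univ \ (chosen π m).toFinset)

/-- the set of jobs chosen in the first `m` steps -/
def used (π : Fin 2 → J → ℕ) (m : ℕ) : Finset J := (chosen π m).toFinset

lemma used_zero (π : Fin 2 → J → ℕ) : used π 0 = ∅ := rfl

lemma used_succ (π : Fin 2 → J → ℕ) (m : ℕ) :
    used π (m+1) = insert (cjob π m) (used π m) := by
  simp only [used, chosen, cjob, List.toFinset_append, List.toFinset_cons, List.toFinset_nil,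
    LawfulSingleton.insert_empty_eq]
  rw [Finset.union_comm]
  simp [Finset.insert_eq, -Finset.singleton_union]

lemma used_mono (π : Fin 2 → J → ℕ) {m m' : ℕ} (h : m ≤ m') : used π m ⊆ used π m' := by
  induction m' with
  | zero => rw [Nat.le_zero.1 h]
  | succ m'' ih =>
    rcases Nat.lt_or_ge m (m''+1) with h' | h'
    · exact (ih (by omega)).trans (by rw [used_succ]; exact Finset.subset_insert _ _)
    · rw [show m = m''+1 by omega]

lemma card_used_le (π : Fin 2 → J → ℕ) (m : ℕ) : (used π m).card ≤ m := by
  induction m with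
  | zero => simp [used_zero]
  | succ m' ih =>
    rw [used_succ]
    calc (insert (cjob π m') (used π m')).card ≤ (used π m').card + 1 := Finset.card_insert_le _ _
    _ ≤ m' + 1 := by omega

lemma rem_nonempty (π : Fin 2 → J → ℕ) {m : ℕ} (h : m < Fintype.card J) :
    (univ \ used π m).Nonempty := by
  rw [← Finset.card_pos, Finset.card_sdiff_of_subset (Finset.subset_univ _), Finset.card_univ]
  have := card_used_le π m
  omega

lemma cjob_mem_rem (π : Fin 2 → J → ℕ) {m : ℕ} (h : m < Fintype.card J) :
    cjob π m ∈ univ \ used π m :=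
  pick_mem (rem_nonempty π h)

lemma cjob_not_used (π : Fin 2 → J → ℕ) {m : ℕ} (h : m < Fintype.card J) :
    cjob π m ∉ used π m :=
  (Finset.mem_sdiff.1 (cjob_mem_rem π h)).2

lemma cjob_min (π : Fin 2 → J → ℕ) (m : ℕ) :
    ∀ x ∈ univ \ used π m, π (mach m) (cjob π m) ≤ π (mach m) x := by
  intro x hx
  exact pick_min ⟨x, hx⟩ x hx

lemma used_eq_image (π : Fin 2 → J → ℕ) (m : ℕ) :
    used π m = (Finset.range m).image (cjob π) := by
  induction m with
  | zero => simp [used_zero]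
  | succ m' ih => rw [used_succ, ih, Finset.range_add_one, Finset.image_insert]

lemma cjob_ne (π : Fin 2 → J → ℕ) {m' m : ℕ} (h : m' < m) (hm : m < Fintype.card J) :
    cjob π m ≠ cjob π m' := by
  intro hc
  apply cjob_not_used π hm
  rw [hc, used_eq_image]
  exact Finset.mem_image.2 ⟨m', Finset.mem_range.2 h, rfl⟩

lemma cjob_key (π : Fin 2 → J → ℕ) (hπ : ∀ i, Function.Injective (π i))
    {m' m : ℕ} (h : m' < m) (hm : m < Fintype.card J) :
    π (mach m') (cjob π m') < π (mach m') (cjob π m) := by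
  have hmem : cjob π m ∈ univ \ used π m' := by
    rw [Finset.mem_sdiff]
    refine ⟨Finset.mem_univ _, fun hc => ?_⟩
    exact cjob_not_used π hm (used_mono π (by omega : m' ≤ m) hc)
  have hle := cjob_min π m' (cjob π m) hmem
  rcases hle.lt_or_eq with hlt | heq
  · exact hlt
  · exact absurd (hπ (mach m') heq) (Ne.symm (cjob_ne π h hm))

lemma card_used (π : Fin 2 → J → ℕ) {m : ℕ} (hm : m ≤ Fintype.card J) :
    (used π m).card = m := by
  induction m with
  | zero => simp [used_zero]
  | succ m' ih =>
    rw [used_succ, Finset.card_insert_of_notMem (cjob_not_used π (by omega)), ih (by omega)]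

lemma used_all (π : Fin 2 → J → ℕ) : used π (Fintype.card J) = univ := by
  exact Finset.eq_univ_of_card _ (card_used π le_rfl)

lemma cjob_injOn (π : Fin 2 → J → ℕ) {m' m : ℕ} (h' : m' < Fintype.card J)
    (h : m < Fintype.card J) (hne : m' ≠ m) : cjob π m' ≠ cjob π m := by
  rcases Nat.lt_or_ge m' m with hlt | hge
  · exact (cjob_ne π hlt h).symm
  · exact fun hc => cjob_ne π (show m < m' by omega) h' hc

end Greedy

end OddNEAux

open OddNEAux in
/-- On two identical machines with unit jobs and an odd number of jobs, a NE exists. -/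
theorem odd_NE_exists (n : ℕ) (hodd : Odd n)
    (π : Fin 2 → Fin n → ℕ) (hπ : ∀ i, Function.Injective (π i)) :
    ∃ s : Fin n → Fin 2, IsNE (fun _ => (1:ℝ)) (fun _ => (1:ℝ)) π s := by
  classical
  obtain ⟨k, rfl⟩ := hodd
  haveI : Nonempty (Fin (2*k+1)) := ⟨⟨0, by omega⟩⟩
  have hcard : Fintype.card (Fin (2*k+1)) = 2*k+1 := Fintype.card_fin _
  -- every job is chosen at some step
  have hex : ∀ j : Fin (2*k+1), ∃ m, m < 2*k+1 ∧ cjob π m = j := by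
    intro j
    have hj : j ∈ used π (Fintype.card (Fin (2*k+1))) := by
      rw [used_all]
      exact Finset.mem_univ j
    rw [used_eq_image, hcard] at hj
    simp only [Finset.mem_image, Finset.mem_range] at hj
    rcases hj with ⟨m, hm, hmj⟩
    exact ⟨m, hm, hmj⟩
  choose idx hidx1 hidx2 using hex
  have idx_cjob : ∀ m, m < 2*k+1 → idx (cjob π m) = m := by
    intro m hm
    by_contra hne
    exact cjob_injOn π (by rw [hcard]; exact hidx1 _) (by rwa [hcard]) hne (hidx2 (cjob π m))
  set s : Fin (2*k+1) → Fin 2 := fun j => mach (idx j) with hs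
  refine ⟨s, ?_⟩
  have hcinj : Set.InjOn (cjob π) ↑(Finset.range (2*k+1)) := by
    intro x hx y hy hxy
    by_contra hne
    exact cjob_injOn π (by rw [hcard]; exact Finset.mem_range.1 (Finset.mem_coe.1 hx))
      (by rw [hcard]; exact Finset.mem_range.1 (Finset.mem_coe.1 hy)) hne hxy
  have hmset : ∀ i : Fin 2, mset s i
      = (((Finset.range (2*k+1)).filter fun m => mach m = i)).image (cjob π) := by
    intro i
    ext j
    simp only [mem_mset, Finset.mem_image, Finset.mem_filter, Finset.mem_range]
    constructor
    · intro hj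
      exact ⟨idx j, ⟨hidx1 j, hj⟩, hidx2 j⟩
    · rintro ⟨m, ⟨hm, hmach⟩, rfl⟩
      show mach (idx (cjob π m)) = i
      rw [idx_cjob m hm, hmach]
  have hE0 : ((Finset.range (2*k+1)).filter fun m => mach m = 0)
      = (Finset.range (k+1)).image (fun v => 2*v) := by
    ext m
    simp only [Finset.mem_filter, Finset.mem_range, Finset.mem_image, mach_zero_iff]
    constructor
    · rintro ⟨hm, h2⟩
      exact ⟨m/2, by omega, by omega⟩
    · rintro ⟨v, hv, hvm⟩
      have hvm' : 2*v = m := hvm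
      omega
  have hE1 : ((Finset.range (2*k+1)).filter fun m => mach m = 1)
      = (Finset.range k).image (fun v => 2*v+1) := by
    ext m
    simp only [Finset.mem_filter, Finset.mem_range, Finset.mem_image, mach_one_iff]
    constructor
    · rintro ⟨hm, h2⟩
      exact ⟨m/2, by omega, by omega⟩
    · rintro ⟨v, hv, hvm⟩
      have hvm' : 2*v+1 = m := hvm
      omega
  have hinj0 : Function.Injective (fun v : ℕ => 2*v) := by
    intro a b h
    have h' : 2*a = 2*b := h
    omega
  have hinj1 : Function.Injective (fun v : ℕ => 2*v+1) := by
    intro a b h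
    have h' : 2*a+1 = 2*b+1 := h
    omega
  have hcard0 : (mset s 0).card = k+1 := by
    rw [hmset 0, Finset.card_image_of_injOn (hcinj.mono (Finset.coe_subset.2 (Finset.filter_subset _ _))),
      hE0, Finset.card_image_of_injective _ hinj0, Finset.card_range]
  have hcard1 : (mset s 1).card = k := by
    rw [hmset 1, Finset.card_image_of_injOn (hcinj.mono (Finset.coe_subset.2 (Finset.filter_subset _ _))),
      hE1, Finset.card_image_of_injective _ hinj1, Finset.card_range]
  -- position of the job chosen at step m on its machine
  have hpos : ∀ (i : Fin 2) (m : ℕ), m < 2*k+1 → mach m = i →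
      posIn (π i) (mset s i) (cjob π m)
        = ((((Finset.range (2*k+1)).filter fun m' => mach m' = i).filter fun m' => m' ≤ m)).card := by
    intro i m hm hmach
    unfold posIn
    have hflt : (mset s i).filter (fun x => π i x ≤ π i (cjob π m))
        = ((((Finset.range (2*k+1)).filter fun m' => mach m' = i).filter fun m' => m' ≤ m)).image (cjob π) := by
      ext x
      constructor
      · intro hx0
        rcases Finset.mem_filter.1 hx0 with ⟨hx1, hx2⟩
        rw [hmset i] at hx1
        simp only [Finset.mem_image] at hx1
        rcases hx1 with ⟨m', hm', rfl⟩
        have hm'n := Finset.mem_range.1 (Finset.mem_filter.1 hm').1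
        refine Finset.mem_image.2 ⟨m', Finset.mem_filter.2 ⟨hm', ?_⟩, rfl⟩
        by_contra hgt
        push_neg at hgt
        have hkey := cjob_key π hπ hgt (by rw [hcard]; exact hm'n)
        rw [hmach] at hkey
        omega
      · intro hx0
        simp only [Finset.mem_image] at hx0
        rcases hx0 with ⟨m', hm', rfl⟩
        rcases Finset.mem_filter.1 hm' with ⟨hm'E, hm'le⟩
        rcases Finset.mem_filter.1 hm'E with ⟨hm'r, hm'mach⟩
        refine Finset.mem_filter.2 ⟨by rw [hmset i]; exact Finset.mem_image_of_mem _ hm'E, ?_⟩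
        rcases Nat.lt_or_ge m' m with hlt | hge
        · have hkey := cjob_key π hπ hlt (by rw [hcard]; omega)
          rw [hm'mach] at hkey
          exact hkey.le
        · have heq : m' = m := by omega
          rw [heq]
    rw [hflt]
    exact Finset.card_image_of_injOn (hcinj.mono (Finset.coe_subset.2
      ((Finset.filter_subset _ _).trans (Finset.filter_subset _ _))))
  -- lower bound on how many machine-i jobs come before the job chosen at step m in π i
  have hbefore : ∀ (i : Fin 2) (m : ℕ) (c : ℕ), m < 2*k+1 →
      (∀ v, v < c → 2*v + (if i = 1 then 1 else 0) < m) →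
      c ≤ ((mset s i).filter fun x => π i x ≤ π i (cjob π m)).card := by
    intro i m c hm hlt
    have hsub : (((Finset.range c).image (fun v => 2*v + (if i = 1 then 1 else 0))).image (cjob π))
        ⊆ (mset s i).filter fun x => π i x ≤ π i (cjob π m) := by
      intro x hx
      simp only [Finset.mem_image, Finset.mem_range] at hx
      rcases hx with ⟨m', ⟨v, hv, rfl⟩, rfl⟩
      have hm'm : 2*v + (if i = 1 then 1 else 0) < m := hlt v hv
      have hmach' : mach (2*v + (if i = 1 then 1 else 0)) = i := by
        rcases fin2_cases 0 i with h0 | h0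
        · subst h0
          rw [if_neg (by decide : ¬ (0:Fin 2) = 1)]
          exact (mach_zero_iff _).2 (by omega)
        · have h1 : i = 1 := by rw [h0]; decide
          subst h1
          rw [if_pos rfl]
          exact (mach_one_iff _).2 (by omega)
      refine Finset.mem_filter.2 ⟨?_, ?_⟩
      · rw [hmset i]
        exact Finset.mem_image_of_mem _
          (Finset.mem_filter.2 ⟨Finset.mem_range.2 (by omega), hmach'⟩)
      · have hkey := cjob_key π hπ hm'm (by rw [hcard]; exact hm)
        rw [hmach'] at hkey
        exact hkey.le
    have hinj2 : Function.Injective (fun v : ℕ => 2*v + (if i = 1 then 1 else 0)) := by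
      intro a b h
      have h' : 2*a + (if i = 1 then 1 else 0) = 2*b + (if i = 1 then 1 else 0) := h
      omega
    calc c = (((Finset.range c).image (fun v => 2*v + (if i = 1 then 1 else 0))).image (cjob π)).card := by
          rw [Finset.card_image_of_injOn (hcinj.mono ?_),
            Finset.card_image_of_injective _ hinj2,
            Finset.card_range]
          intro x hx
          simp only [Finset.mem_coe, Finset.mem_image, Finset.mem_range] at hx
          rcases hx with ⟨v, hv, rfl⟩
          simp only [Finset.mem_coe, Finset.mem_range]
          have := hlt v hv
          omega
      _ ≤ _ := Finset.card_le_card hsub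
  -- the Nash equilibrium property
  intro j i'
  by_cases hii : i' = s j
  · intro hben
    rw [hii] at hben
    unfold Beneficial at hben
    simp only [Function.update_eq_self] at hben
    rcases hben with h | ⟨_, h⟩ <;> exact lt_irrefl _ h
  · have hmachidx : mach (idx j) = s j := rfl
    rcases fin2_cases 0 (s j) with hsj0 | hsj1'
    -- case s j = 0
    · have hi1 : i' = 1 := by
        have hb2 : ∀ b : Fin 2, b ≠ 0 → b = 1 := by decide
        exact hb2 i' (fun h => hii (h.trans hsj0.symm))
      subst hi1
      have hmach0 : mach (idx j) = 0 := by rw [hmachidx, hsj0]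
      have hm2 : idx j % 2 = 0 := (mach_zero_iff _).1 hmach0
      set u := idx j / 2 with hu
      have hmu : idx j = 2*u := by omega
      have huk : u ≤ k := by
        have := hidx1 j
        omega
      have hjnotin : j ∉ mset s 1 := by
        rw [mem_mset, hsj0]
        decide
      have hjin : j ∈ mset s 0 := mem_mset.2 hsj0
      -- position of j on machine 0
      have ht : posIn (π 0) (mset s 0) j = u + 1 := by
        conv_lhs => rw [← hidx2 j]
        rw [hpos 0 (idx j) (hidx1 j) hmach0]
        have hef : (((Finset.range (2*k+1)).filter fun m' => mach m' = 0).filter fun m' => m' ≤ idx j)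
            = (Finset.range (u+1)).image (fun v => 2*v) := by
          ext x
          simp only [Finset.mem_filter, Finset.mem_range, Finset.mem_image, mach_zero_iff]
          constructor
          · rintro ⟨⟨hx1, hx2⟩, hx3⟩
            exact ⟨x/2, by omega, by omega⟩
          · rintro ⟨v, hv, rfl⟩
            have h1 := hidx1 j
            refine ⟨⟨show 2*v < 2*k+1 by omega, show (2*v) % 2 = 0 by omega⟩, show 2*v ≤ idx j by omega⟩
        rw [hef, Finset.card_image_of_injective _ hinj0, Finset.card_range]
      -- bound on the new position
      have hb : u ≤ ((mset s 1).filter fun x => π 1 x ≤ π 1 j).card := by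
        conv_rhs => rw [← hidx2 j]
        refine hbefore 1 (idx j) u (hidx1 j) ?_
        intro v hv
        rw [if_pos rfl]
        omega
      have hupdne : s j ≠ 1 := by rw [hsj0]; decide
      apply not_beneficial π hπ
      · -- rank inequality
        simp only [Function.update_self]
        rw [hsj0]
        rw [show ((1:Fin 2) - 1) = 0 from rfl, show ((1:Fin 2) - 0) = 1 from rfl]
        rw [mset_update_self hupdne]
        conv_rhs => rw [show (0:Fin 2) = s j from hsj0.symm]
        rw [mset_update_other hupdne, hsj0]
        rw [card_insert_notmem hjnotin, hcard0, hcard1, card_erase_mem hjin, hcard0]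
        simp only [Nat.add_sub_cancel]
        apply natRank_mono (posIn_pos hjin)
        rw [ht, posIn_insert hjnotin]
        omega
      · -- completion time inequality
        simp only [Function.update_self]
        rw [hsj0]
        rw [mset_update_self hupdne]
        rw [ht, posIn_insert hjnotin]
        omega
    -- case s j = 1
    · have hsj1 : s j = 1 := by rw [hsj1']; decide
      have hi0 : i' = 0 := by
        have hb2 : ∀ b : Fin 2, b ≠ 1 → b = 0 := by decide
        exact hb2 i' (fun h => hii (h.trans hsj1.symm))
      subst hi0
      have hmach1 : mach (idx j) = 1 := by rw [hmachidx, hsj1]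
      have hm2 : idx j % 2 = 1 := (mach_one_iff _).1 hmach1
      set u := idx j / 2 with hu
      have hmu : idx j = 2*u+1 := by omega
      have huk : u < k := by
        have := hidx1 j
        omega
      have hjnotin : j ∉ mset s 0 := by
        rw [mem_mset, hsj1]
        decide
      have hjin : j ∈ mset s 1 := mem_mset.2 hsj1
      have ht : posIn (π 1) (mset s 1) j = u + 1 := by
        conv_lhs => rw [← hidx2 j]
        rw [hpos 1 (idx j) (hidx1 j) hmach1]
        have hef : (((Finset.range (2*k+1)).filter fun m' => mach m' = 1).filter fun m' => m' ≤ idx j)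
            = (Finset.range (u+1)).image (fun v => 2*v+1) := by
          ext x
          simp only [Finset.mem_filter, Finset.mem_range, Finset.mem_image, mach_one_iff]
          constructor
          · rintro ⟨⟨hx1, hx2⟩, hx3⟩
            exact ⟨x/2, by omega, by omega⟩
          · rintro ⟨v, hv, rfl⟩
            have h1 := hidx1 j
            refine ⟨⟨show 2*v+1 < 2*k+1 by omega, show (2*v+1) % 2 = 1 by omega⟩, show 2*v+1 ≤ idx j by omega⟩
        rw [hef, Finset.card_image_of_injective _ hinj1, Finset.card_range]
      have hb : u + 1 ≤ ((mset s 0).filter fun x => π 0 x ≤ π 0 j).card := by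
        conv_rhs => rw [← hidx2 j]
        refine hbefore 0 (idx j) (u+1) (hidx1 j) ?_
        intro v hv
        rw [if_neg (by decide : ¬ (0:Fin 2) = 1)]
        omega
      have hupdne : s j ≠ 0 := by rw [hsj1]; decide
      apply not_beneficial π hπ
      · simp only [Function.update_self]
        rw [hsj1]
        rw [show ((1:Fin 2) - 1) = 0 from rfl, show ((1:Fin 2) - 0) = 1 from rfl]
        rw [mset_update_self hupdne]
        conv_rhs => rw [show (1:Fin 2) = s j from hsj1.symm]
        rw [mset_update_other hupdne, hsj1]
        rw [card_insert_notmem hjnotin, hcard0, hcard1, card_erase_mem hjin, hcard1]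
        rw [ht, posIn_insert hjnotin]
        have hk2 : k + 1 + 1 = k + 2 := by omega
        rw [hk2]
        exact natRank_move (by omega) huk (by omega)
      · simp only [Function.update_self]
        rw [hsj1]
        rw [mset_update_self hupdne]
        rw [ht, posIn_insert hjnotin]
        omega
end
end

section
/- Consider a scheduling game with rank-based utilities on two machines with speeds r₁ = 1 and r₂ = r, where 0 < r < 1 and r is irrational, with unit jobs and arbitrary priority lists. Then the game admits a pure Nash equilibrium. -/
open Finset
open scoped Classical

noncomputable section

variable {J M : Type*} [Fintype J]

/-!
Process all unit slots of all machines in increasing order of completion time (for machine `i`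
these are `1 / v i, 2 / v i, …`; irrational speed ratios make all of them distinct), and let the
machine owning each slot take its favourite among the jobs not yet taken. In the resulting
profile the `m`-th slot's job has rank `m + 1`. A deviation cannot lower that rank: every job
that finished earlier is preferred by its own machine to the deviator and so keeps finishing
earlier, while the deviator lands behind all jobs its new machine took before, i.e. in a slot
later than its old one, which also rules out a gain in completion time.
-/

section Stability

variable {p : J → ℝ} {r : M → ℝ} {π : M → J → ℕ} {s : J → M}

variable (p r π s) in
lemma one_le_card_Ctime_eq (j : J) : (1 : ℝ) ≤ #{j' | Ctime p r π s j' = Ctime p r π s j} := by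
  exact_mod_cast card_pos.2 ⟨j, by simp⟩

lemma card_lt_add_one_le_rankOf (j : J) :
    (#{j' | Ctime p r π s j' < Ctime p r π s j} : ℝ) + 1 ≤ rankOf p r π s j := by
  rw [rankOf]
  linarith [one_le_card_Ctime_eq p r π s j]

lemma rankOf_le_card_le (j : J) :
    rankOf p r π s j ≤ #{j' | Ctime p r π s j' ≤ Ctime p r π s j} := by
  have hsplit : #{j' | Ctime p r π s j' ≤ Ctime p r π s j} =
      #{j' | Ctime p r π s j' < Ctime p r π s j} + #{j' | Ctime p r π s j' = Ctime p r π s j} := by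
    simp_rw [le_iff_lt_or_eq, filter_or]
    exact card_union_of_disjoint (disjoint_filter.2 fun _ _ hlt heq => hlt.ne heq)
  rw [rankOf, hsplit]
  push_cast
  linarith [one_le_card_Ctime_eq p r π s j]

lemma Ctime_update_le (hp : ∀ j, 0 ≤ p j) (hr : ∀ i, 0 ≤ r i) {j j' : J} {i : M}
    (hj' : j' ≠ j) (hprio : s j' = i → π i j' < π i j) :
    Ctime p r π (Function.update s j i) j' ≤ Ctime p r π s j' := by
  rw [Ctime, Ctime, Function.update_of_ne hj']
  refine div_le_div_of_nonneg_right (sum_le_sum_of_subset_of_nonneg ?_ fun k _ _ => hp k) (hr _)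
  intro k hk
  simp only [mem_filter, mem_univ, true_and] at hk ⊢
  obtain rfl | hk' := eq_or_ne k j
  · rw [Function.update_self] at hk
    obtain ⟨rfl, hle⟩ := hk
    exact absurd hle (hprio rfl).not_ge
  · rwa [Function.update_of_ne hk'] at hk

theorem isNE_of_preferred_of_deviation_delays (hp : ∀ j, 0 ≤ p j) (hr : ∀ i, 0 ≤ r i)
    (hprio : ∀ j j', j' ≠ j → Ctime p r π s j' ≤ Ctime p r π s j → π (s j') j' < π (s j') j)
    (hdelay : ∀ j i, i ≠ s j → Ctime p r π s j < Ctime p r π (Function.update s j i) j) :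
    IsNE p r π s := by
  intro j i hben
  obtain rfl | hi := eq_or_ne i (s j)
  · rw [Beneficial, Function.update_eq_self] at hben
    exact hben.elim (lt_irrefl _) fun h => lt_irrefl _ h.2
  set s' := Function.update s j i
  have hsub : (univ.filter fun j' => Ctime p r π s j' ≤ Ctime p r π s j).erase j ⊆
      univ.filter fun j' => Ctime p r π s' j' < Ctime p r π s' j := by
    intro j' hj'
    simp only [mem_erase, mem_filter, mem_univ, true_and] at hj' ⊢
    obtain ⟨hne, hle⟩ := hj'
    calc Ctime p r π s' j' ≤ Ctime p r π s j' :=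
          Ctime_update_le hp hr hne fun h => h ▸ hprio j j' hne hle
      _ ≤ Ctime p r π s j := hle
      _ < Ctime p r π s' j := hdelay j i hi
  have hcard := card_le_card hsub
  rw [card_erase_of_mem (by simp)] at hcard
  have hpos : 0 < #{j' | Ctime p r π s j' ≤ Ctime p r π s j} := card_pos.2 ⟨j, by simp⟩
  have hrank : rankOf p r π s j ≤ rankOf p r π s' j :=
    calc rankOf p r π s j ≤ #{j' | Ctime p r π s j' ≤ Ctime p r π s j} := rankOf_le_card_le j
      _ ≤ (#{j' | Ctime p r π s' j' < Ctime p r π s' j} : ℝ) + 1 := by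
        exact_mod_cast (by omega : _ ≤ #{j' | Ctime p r π s' j' < Ctime p r π s' j} + 1)
      _ ≤ rankOf p r π s' j := card_lt_add_one_le_rankOf j
  rcases hben with h | ⟨_, h⟩
  · linarith
  · linarith [hdelay j i hi]

end Stability

lemma Ctime_one (r : M → ℝ) (π : M → J → ℕ) (s : J → M) (j : J) :
    Ctime (fun _ => 1) r π s j = #{j' | s j' = s j ∧ π (s j) j' ≤ π (s j) j} / r (s j) := by
  rw [Ctime, sum_const, nsmul_one]

section Slots

variable [Fintype M] [Nonempty M] (v : M → ℝ)

/-- No unit slot of one machine ends exactly when a unit slot of another machine does. -/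
def SlotTimesDistinct : Prop :=
  Pairwise fun i i' => ∀ k k' : ℕ, ((k : ℝ) + 1) / v i ≠ ((k' : ℝ) + 1) / v i'

def nextTime (a : M → ℕ) (i : M) : ℝ := ((a i : ℝ) + 1) / v i

def nextMachine (a : M → ℕ) : M :=
  (univ.exists_min_image (nextTime v a) univ_nonempty).choose

lemma nextTime_nextMachine_le (a : M → ℕ) (i : M) :
    nextTime v a (nextMachine v a) ≤ nextTime v a i :=
  (univ.exists_min_image (nextTime v a) univ_nonempty).choose_spec.2 i (mem_univ i)

/-- The unit slots of all machines, merged in order of completion time: `slotLoad v m i` slots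
of machine `i` come before the `m`-th merged slot. -/
def slotLoad : ℕ → M → ℕ
  | 0 => 0
  | m + 1 => slotLoad m + Pi.single (nextMachine v (slotLoad m)) 1

def slotMachine (m : ℕ) : M := nextMachine v (slotLoad v m)

def slotTime (m : ℕ) : ℝ := nextTime v (slotLoad v m) (slotMachine v m)

lemma slotLoad_succ (m : ℕ) (i : M) :
    slotLoad v (m + 1) i = slotLoad v m i + if i = slotMachine v m then 1 else 0 := by
  rw [slotLoad, Pi.add_apply, Pi.single_apply, slotMachine]

lemma slotLoad_eq_card (m : ℕ) (i : M) :
    slotLoad v m i = #{m' ∈ range m | slotMachine v m' = i} := by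
  induction m with
  | zero => rfl
  | succ m ih =>
    rw [slotLoad_succ, ih, range_add_one, filter_insert]
    split_ifs with h h' h'
    · rw [card_insert_of_notMem (by simp)]
    · exact absurd h.symm h'
    · exact absurd h'.symm h
    · rfl

variable {v}

lemma slotTime_lt_nextTime (hdist : SlotTimesDistinct v)
    {m : ℕ} {i : M} (hi : i ≠ slotMachine v m) :
    slotTime v m < nextTime v (slotLoad v m) i :=
  (nextTime_nextMachine_le v _ i).lt_of_ne (hdist (Ne.symm hi) _ _)

lemma slotTime_strictMono (hv : ∀ i, 0 < v i)
    (hdist : SlotTimesDistinct v) :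
    StrictMono (slotTime v) := by
  refine strictMono_nat_of_lt_succ fun m => ?_
  set i := slotMachine v (m + 1)
  change slotTime v m < nextTime v (slotLoad v (m + 1)) i
  rw [nextTime, slotLoad_succ]
  split_ifs with hi
  · rw [slotTime, nextTime, ← hi]
    push_cast
    gcongr
    · exact hv i
    · linarith
  · exact slotTime_lt_nextTime hdist hi

end Slots

/-- Serial dictatorship of the machines: at step `m` machine `μ m` takes its favourite
among the jobs not yet taken. -/
def IsGreedyOrder (μ : ℕ → M) (π : M → J → ℕ) {N : ℕ} (e : Fin N ≃ J) : Prop :=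
  ∀ m m' : Fin N, m < m' → π (μ m) (e m) < π (μ m) (e m')

theorem exists_isGreedyOrder (μ : ℕ → M) (π : M → J → ℕ) (hπ : ∀ i, Function.Injective (π i))
    {N : ℕ} (hN : Fintype.card J = N) : ∃ e : Fin N ≃ J, IsGreedyOrder μ π e := by
  induction N generalizing J μ with
  | zero => exact ⟨(Fintype.equivFinOfCardEq hN).symm, fun m => m.elim0⟩
  | succ N ih =>
    have : Nonempty J := Fintype.card_pos_iff.1 (by omega)
    obtain ⟨j₀, -, hj₀⟩ := univ.exists_min_image (π (μ 0)) univ_nonempty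
    have hcard : Fintype.card {j // j ≠ j₀} = N := by
      have := Fintype.card_congr (Equiv.optionSubtypeNe j₀)
      rw [Fintype.card_option] at this
      omega
    obtain ⟨e', he'⟩ := ih (J := {j // j ≠ j₀}) (fun m => μ (m + 1)) (fun i j => π i j)
      (fun i => (hπ i).comp Subtype.val_injective) hcard
    refine ⟨(finSuccEquiv N).trans (e'.optionCongr.trans (Equiv.optionSubtypeNe j₀)), ?_⟩
    intro m m' hm
    induction m using Fin.cases with
    | zero =>
      induction m' using Fin.cases with
      | zero => exact absurd hm (lt_irrefl 0)
      | succ k =>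
        simp only [Equiv.trans_apply, finSuccEquiv_zero, finSuccEquiv_succ,
          Equiv.optionCongr_apply, Option.map_none, Option.map_some,
          Equiv.optionSubtypeNe_none, Equiv.optionSubtypeNe_some, Fin.val_zero]
        exact (hj₀ _ (mem_univ _)).lt_of_ne fun h => (e' k).2 (hπ _ h).symm
    | succ k =>
      induction m' using Fin.cases with
      | zero => exact absurd hm (Fin.not_lt_zero _)
      | succ k' =>
        simp only [Equiv.trans_apply, finSuccEquiv_succ, Equiv.optionCongr_apply,
          Option.map_some, Equiv.optionSubtypeNe_some, Fin.val_succ]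
        exact he' k k' (Fin.succ_lt_succ_iff.1 hm)

section GreedyProfile

variable [Fintype M] [Nonempty M] {v : M → ℝ} {π : M → J → ℕ} {e : Fin (Fintype.card J) ≃ J}

def greedyProfile (v : M → ℝ) (e : Fin (Fintype.card J) ≃ J) (j : J) : M :=
  slotMachine v (e.symm j)

lemma priority_lt_of_symm_lt (he : IsGreedyOrder (slotMachine v) π e) {j j' : J}
    (h : e.symm j' < e.symm j) :
    π (greedyProfile v e j') j' < π (greedyProfile v e j') j := by
  simpa [greedyProfile] using he _ _ h

lemma card_earlier_eq_slotLoad (j : J) (i : M) :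
    #{j' | greedyProfile v e j' = i ∧ e.symm j' < e.symm j} = slotLoad v (e.symm j) i := by
  rw [slotLoad_eq_card]
  refine card_nbij (fun j' => (e.symm j' : ℕ)) (fun j' hj' => ?_)
    (fun a _ b _ h => e.symm.injective (Fin.ext h)) (fun m hm => ?_)
  · simp only [mem_coe, mem_filter, mem_univ, true_and, mem_range] at hj' ⊢
    exact ⟨hj'.2, hj'.1⟩
  · simp only [mem_coe, mem_filter, mem_range] at hm
    have hmem : e ⟨m, hm.1.trans (e.symm j).2⟩ ∈
        univ.filter fun j' => greedyProfile v e j' = i ∧ e.symm j' < e.symm j := by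
      rw [mem_filter, greedyProfile, Equiv.symm_apply_apply]
      exact ⟨mem_univ _, hm.2, hm.1⟩
    exact ⟨_, hmem, by simp⟩

lemma Ctime_greedyProfile (he : IsGreedyOrder (slotMachine v) π e) (j : J) :
    Ctime (fun _ => 1) v π (greedyProfile v e) j = slotTime v (e.symm j) := by
  set s := greedyProfile v e
  have hset : (univ.filter fun j' => s j' = s j ∧ π (s j) j' ≤ π (s j) j) =
      insert j (univ.filter fun j' => s j' = s j ∧ e.symm j' < e.symm j) := by
    ext j'
    simp only [mem_filter, mem_univ, true_and, mem_insert]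
    constructor
    · rintro ⟨hs, hle⟩
      rcases lt_trichotomy (e.symm j') (e.symm j) with h | h | h
      · exact Or.inr ⟨hs, h⟩
      · exact Or.inl (e.symm.injective h)
      · exact absurd hle (priority_lt_of_symm_lt he h).not_ge
    · rintro (rfl | ⟨hs, hlt⟩)
      · exact ⟨rfl, le_rfl⟩
      · exact ⟨hs, hs ▸ (priority_lt_of_symm_lt he hlt).le⟩
  rw [Ctime_one, hset, card_insert_of_notMem (by simp), card_earlier_eq_slotLoad]
  push_cast
  rfl

lemma slotTime_lt_Ctime_update (hv : ∀ i, 0 < v i)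
    (hdist : SlotTimesDistinct v)
    (he : IsGreedyOrder (slotMachine v) π e) {j : J} {i : M} (hi : i ≠ greedyProfile v e j) :
    slotTime v (e.symm j) < Ctime (fun _ => 1) v π (Function.update (greedyProfile v e) j i) j := by
  refine (slotTime_lt_nextTime hdist hi).trans_le ?_
  have hsub : insert j (univ.filter fun j' => greedyProfile v e j' = i ∧ e.symm j' < e.symm j) ⊆
      univ.filter fun j' => Function.update (greedyProfile v e) j i j' = i ∧ π i j' ≤ π i j := by
    intro j' hj'
    simp only [mem_insert, mem_filter, mem_univ, true_and] at hj' ⊢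
    rcases hj' with rfl | ⟨hs, hlt⟩
    · simp
    · rw [Function.update_of_ne (fun h => (h ▸ hlt).false), ← hs]
      exact ⟨rfl, (priority_lt_of_symm_lt he hlt).le⟩
  have hcard := card_le_card hsub
  rw [card_insert_of_notMem (by simp), card_earlier_eq_slotLoad] at hcard
  rw [Ctime_one, Function.update_self, nextTime]
  gcongr
  · exact (hv i).le
  · exact_mod_cast hcard

theorem isNE_greedyProfile (hv : ∀ i, 0 < v i)
    (hdist : SlotTimesDistinct v)
    (he : IsGreedyOrder (slotMachine v) π e) :
    IsNE (fun _ => 1) v π (greedyProfile v e) := by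
  refine isNE_of_preferred_of_deviation_delays (fun _ => zero_le_one) (fun i => (hv i).le)
    (fun j j' hne hle => ?_) (fun j i hi => ?_)
  · rw [Ctime_greedyProfile he, Ctime_greedyProfile he,
      (slotTime_strictMono hv hdist).le_iff_le, ← Fin.le_def] at hle
    exact priority_lt_of_symm_lt he (hle.lt_of_ne (e.symm.injective.ne hne))
  · rw [Ctime_greedyProfile he]
    exact slotTime_lt_Ctime_update hv hdist he hi

end GreedyProfile

theorem exists_isNE_of_unit_jobs [Fintype M] [Nonempty M] {v : M → ℝ} (hv : ∀ i, 0 < v i)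
    (hdist : SlotTimesDistinct v)
    (π : M → J → ℕ) (hπ : ∀ i, Function.Injective (π i)) :
    ∃ s : J → M, IsNE (fun _ => 1) v π s := by
  obtain ⟨e, he⟩ := exists_isGreedyOrder (slotMachine v) π hπ rfl
  exact ⟨greedyProfile v e, isNE_greedyProfile hv hdist he⟩

lemma slotTimesDistinct_of_irrational {r : ℝ} (hr0 : 0 < r) (hirr : Irrational r) :
    SlotTimesDistinct ![1, r] := by
  have key : ∀ k k' : ℕ, ((k : ℝ) + 1) / 1 ≠ ((k' : ℝ) + 1) / r := by
    intro k k' h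
    rw [div_one, eq_div_iff hr0.ne'] at h
    exact (hirr.natCast_mul k.add_one_ne_zero).ne_nat (k' + 1) (by exact_mod_cast h)
  intro i i' hii' k k'
  fin_cases i <;> fin_cases i'
  · exact absurd rfl hii'
  · exact key k k'
  · exact (key k' k).symm
  · exact absurd rfl hii'

theorem irrational_NE_exists_general (n : ℕ) (r : ℝ) (hr0 : 0 < r)
    (hirr : Irrational r)
    (π : Fin 2 → Fin n → ℕ) (hπ : ∀ i, Function.Injective (π i)) :
    ∃ s : Fin n → Fin 2, IsNE (fun _ => (1:ℝ)) ![1, r] π s :=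
  exists_isNE_of_unit_jobs (by simp [Fin.forall_fin_two, hr0])
    (slotTimesDistinct_of_irrational hr0 hirr) π hπ

/-- Two related machines with irrational speed ratio and unit jobs: a NE exists. -/
theorem irrational_NE_exists (n : ℕ) (r : ℝ) (hr0 : 0 < r) (hr1 : r < 1)
    (hirr : Irrational r)
    (π : Fin 2 → Fin n → ℕ) (hπ : ∀ i, Function.Injective (π i)) :
    ∃ s : Fin n → Fin 2, IsNE (fun _ => (1:ℝ)) ![1, r] π s :=
  irrational_NE_exists_general n r hr0 hirr π hπ
end
end
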